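/- arXiv:2512.11765 — 4 statements merged into one kernel-verified Lean document; each statement's English description precedes it below -/
import Mathlib

section
/- Let n ≥ 2 be an integer, ρ > 0, T > 0, and θ > 0. Define 𝕗(t) := (ρ(T−t)+1)/(ρT+1). Then for every t ∈ [0,T) the sequence ( N·|W^{(N)}_t − 𝕗(t)| )_{N ≥ 2} is bounded, and the sequence ( N·|W^{(N)}_T − 1/((2θ + 1/2)(ρT+1))| )_{N ≥ 2} is bounded; in particular W^{(N)}_t → 𝕗(t) for t ∈ [0,T) and W^{(N)}_T → 1/((2θ + 1/2)(ρT+1)) as N → ∞, at rate 1/N. -/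
open Matrix Finset Filter

noncomputable section

/-- The matrix `Γ^θ`. -/
def Gam (ρ θ : ℝ) {N : ℕ} (t : Fin (N + 1) → ℝ) : Matrix (Fin (N + 1)) (Fin (N + 1)) ℝ :=
  Matrix.of (fun i j => Real.exp (-(ρ * |t i - t j|)) + (if i = j then 2 * θ else 0))

/-- The matrix `Γ̃`. -/
def GamT (ρ : ℝ) {N : ℕ} (t : Fin (N + 1) → ℝ) : Matrix (Fin (N + 1)) (Fin (N + 1)) ℝ :=
  Matrix.of (fun i j =>
    if i < j then 0 else if i = j then 1 / 2 else Real.exp (-(ρ * (t i - t j))))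

/-- The equidistant grid `t_k = kT/N`. -/
def egrid (T : ℝ) (N : ℕ) : Fin (N + 1) → ℝ := fun k => (k.val : ℝ) * T / (N : ℝ)

/-- `ν^{(N)} := (Γ^θ + (n−1)Γ̃)^{−1} 1` on the equidistant `N`-step grid. -/
def nuN (n N : ℕ) (ρ T θ : ℝ) : Fin (N + 1) → ℝ :=
  (Gam ρ θ (egrid T N) + ((n : ℝ) - 1) • GamT ρ (egrid T N))⁻¹.mulVec 1

/-- `ω^{(N)} := (Γ^θ − Γ̃)^{−1} 1` on the equidistant `N`-step grid. -/
def omN (N : ℕ) (ρ T θ : ℝ) : Fin (N + 1) → ℝ :=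
  (Gam ρ θ (egrid T N) - GamT ρ (egrid T N))⁻¹.mulVec 1

/-- `v^{(N)} := ν^{(N)} / (1^⊤ν^{(N)})`. -/
def vN (n N : ℕ) (ρ T θ : ℝ) : Fin (N + 1) → ℝ :=
  (1 / ∑ k, nuN n N ρ T θ k) • nuN n N ρ T θ

/-- `w^{(N)} := ω^{(N)} / (1^⊤ω^{(N)})`. -/
def wN (N : ℕ) (ρ T θ : ℝ) : Fin (N + 1) → ℝ :=
  (1 / ∑ k, omN N ρ T θ k) • omN N ρ T θ

/-- `V^{(N)}_t = 1 − Σ_{k=1}^{⌈Nt/T⌉} v_k` (paper index `k` is Lean index `k.val + 1`). -/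
def VN (n N : ℕ) (ρ T θ : ℝ) (t : ℝ) : ℝ :=
  1 - ∑ k : Fin (N + 1), (if k.val < ⌈(N : ℝ) * t / T⌉₊ then vN n N ρ T θ k else 0)

/-- `W^{(N)}_t = 1 − Σ_{k=1}^{⌈Nt/T⌉} w_k` (paper index `k` is Lean index `k.val + 1`). -/
def WN (N : ℕ) (ρ T θ : ℝ) (t : ℝ) : ℝ :=
  1 - ∑ k : Fin (N + 1), (if k.val < ⌈(N : ℝ) * t / T⌉₊ then wN N ρ T θ k else 0)

namespace Stmt11Aux

def Uu (a d : ℝ) (N : ℕ) : Matrix (Fin (N+1)) (Fin (N+1)) ℝ :=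
  Matrix.of fun i j => if i < j then a ^ (j.val - i.val) else if i = j then d else 0

def DD (a d : ℝ) : ℝ := a + d * (1 - a)
def rr (a d : ℝ) : ℝ := a * (d - 1) / d
def alp (a d : ℝ) : ℝ := (1 - a) / DD a d
def ff (a d : ℝ) (k : ℕ) : ℝ := alp a d + (1/d - alp a d) * (rr a d)^k
def omn (a d : ℝ) (N : ℕ) : Fin (N+1) → ℝ := fun k => ff a d (N - k.val)

variable {a d : ℝ} {N : ℕ}

lemma hd0 (hd : 1/2 < d) : 0 < d := by linarith

lemma hDD (ha : 0 < a) (ha1 : a < 1) (hd : 1/2 < d) : 0 < DD a d := by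
  unfold DD; nlinarith

lemma h1r (ha : 0 < a) (ha1 : a < 1) (hd : 1/2 < d) : 1 - rr a d = DD a d / d := by
  have : d ≠ 0 := by linarith
  rw [eq_div_iff this, rr, DD, sub_mul, div_mul_cancel₀ _ this]; ring

lemma ff_zero (hd : 1/2 < d) : ff a d 0 = 1/d := by
  simp [ff, alp]

lemma ff_succ (ha : 0 < a) (ha1 : a < 1) (hd : 1/2 < d) (k : ℕ) :
    ff a d (k+1) = (1-a)/d + rr a d * ff a d k := by
  have hD := hDD ha ha1 hd
  have h : alp a d * (1 - rr a d) = (1-a)/d := by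
    rw [h1r ha ha1 hd, alp]
    field_simp
  simp only [ff, pow_succ]
  linear_combination h

lemma row (ha : 0 < a) (ha1 : a < 1) (hd : 1/2 < d) (m : ℕ) :
    d * ff a d m + ∑ l ∈ Finset.range m, a^(m-l) * ff a d l = 1 := by
  induction m with
  | zero => simp [ff_zero hd]; field_simp
  | succ m ih =>
    rw [Finset.sum_range_succ]
    have e1 : ∀ l ∈ Finset.range m, a^(m+1-l) * ff a d l = a * (a^(m-l) * ff a d l) := by
      intro l hl
      simp only [Finset.mem_range] at hl
      have : m+1-l = (m-l)+1 := by omega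
      rw [this, pow_succ]; ring
    rw [Finset.sum_congr rfl e1, ← Finset.mul_sum]
    have : m+1-m = 1 := by omega
    rw [this, ff_succ ha ha1 hd]
    have hd' : d ≠ 0 := by linarith
    have hsum : ∑ l ∈ Finset.range m, a^(m-l) * ff a d l = 1 - d * ff a d m := by linarith
    rw [hsum]
    have hrd : rr a d * d = a * (d-1) := by rw [rr, div_mul_cancel₀ _ hd']
    have hdd : d * ((1-a)/d) = 1-a := by field_simp
    ring_nf
    ring_nf at hdd hrd
    linear_combination hdd + ff a d m * hrd
end Stmt11Aux

namespace Stmt11Aux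
variable {a d : ℝ} {N : ℕ}

lemma mulVec_om (ha : 0 < a) (ha1 : a < 1) (hd : 1/2 < d) :
    (Uu a d N).mulVec (omn a d N) = 1 := by
  funext i
  have hstep : (Uu a d N).mulVec (omn a d N) i
      = ∑ jv ∈ Finset.range (N+1),
        (if (i:ℕ) < jv then a^(jv-(i:ℕ)) else if (i:ℕ) = jv then d else 0) * ff a d (N - jv) := by
    have hpt : ∀ j : Fin (N+1), Uu a d N i j * omn a d N j
        = (fun jv => (if (i:ℕ) < jv then a^(jv-(i:ℕ)) else if (i:ℕ) = jv then d else 0) * ff a d (N - jv)) j.val := by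
      intro j
      simp only [Uu, omn, Matrix.of_apply, Fin.lt_def, Fin.ext_iff]
    have : (Uu a d N).mulVec (omn a d N) i = ∑ j : Fin (N+1), Uu a d N i j * omn a d N j := rfl
    rw [this, Finset.sum_congr rfl (fun j _ => hpt j)]
    exact Fin.sum_univ_eq_sum_range
      (fun jv => (if (i:ℕ) < jv then a^(jv-(i:ℕ)) else if (i:ℕ) = jv then d else 0) * ff a d (N - jv)) (N+1)
  rw [hstep]
  have hi : (i:ℕ) < N + 1 := i.isLt
  rw [Finset.range_eq_Ico, ← Finset.sum_Ico_consecutive _ (Nat.zero_le ((i:ℕ)+1)) (by omega)]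
  have h1 : ∑ jv ∈ Finset.Ico 0 ((i:ℕ)+1),
      (if (i:ℕ) < jv then a^(jv-(i:ℕ)) else if (i:ℕ) = jv then d else 0) * ff a d (N - jv)
      = d * ff a d (N - (i:ℕ)) := by
    rw [← Finset.range_eq_Ico]
    rw [Finset.sum_eq_single_of_mem (i:ℕ) (Finset.self_mem_range_succ _)]
    · simp
    · intro b hb hbne
      simp only [Finset.mem_range] at hb
      have h1 : ¬ ((i:ℕ) < b) := by omega
      have h2 : ¬ ((i:ℕ) = b) := by omega
      simp [h1, h2]
  have h2 : ∑ jv ∈ Finset.Ico ((i:ℕ)+1) (N+1),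
      (if (i:ℕ) < jv then a^(jv-(i:ℕ)) else if (i:ℕ) = jv then d else 0) * ff a d (N - jv)
      = ∑ l ∈ Finset.range (N - (i:ℕ)), a^((N-(i:ℕ))-l) * ff a d l := by
    refine Finset.sum_nbij' (fun jv => N - jv) (fun l => N - l) ?_ ?_ ?_ ?_ ?_
    · intro jv hjv; simp only [Finset.mem_Ico] at hjv; simp only [Finset.mem_range]; omega
    · intro l hl; simp only [Finset.mem_range] at hl; simp only [Finset.mem_Ico]; omega
    · intro jv hjv; simp only [Finset.mem_Ico] at hjv; show N - (N - jv) = jv; omega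
    · intro l hl; simp only [Finset.mem_range] at hl; show N - (N - l) = l; omega
    · intro jv hjv; simp only [Finset.mem_Ico] at hjv
      have hlt : (i:ℕ) < jv := by omega
      have : (N-(i:ℕ)) - (N - jv) = jv - (i:ℕ) := by omega
      rw [if_pos hlt, this]
  rw [h1, h2]
  simpa using row ha ha1 hd (N - (i:ℕ))

lemma Uu_det_isUnit (hd : 1/2 < d) : IsUnit (Uu a d N).det := by
  have htri : (Uu a d N).BlockTriangular id := by
    intro i j hij
    simp only [Uu, Matrix.of_apply]
    have h1 : ¬ (i < j) := by exact not_lt_of_gt hij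
    have h2 : ¬ (i = j) := by exact fun h => absurd h (ne_of_gt hij)
    simp [h1, h2]
  rw [Matrix.det_of_upperTriangular htri]
  have : ∀ i : Fin (N+1), Uu a d N i i = d := by intro i; simp [Uu]
  rw [Finset.prod_congr rfl (fun i _ => this i)]
  simp only [Finset.prod_const]
  exact (isUnit_iff_ne_zero.2 (by positivity)).pow _

lemma inv_one_eq_om (ha : 0 < a) (ha1 : a < 1) (hd : 1/2 < d) :
    (Uu a d N)⁻¹.mulVec 1 = omn a d N := by
  conv_lhs => rw [← mulVec_om (N := N) ha ha1 hd]
  rw [Matrix.mulVec_mulVec, Matrix.nonsing_inv_mul _ (Uu_det_isUnit hd), Matrix.one_mulVec]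

end Stmt11Aux

namespace Stmt11Aux
variable {a d : ℝ} {N : ℕ}

lemma sum_tail (m : ℕ) (hm : m ≤ N+1) :
    ∑ k : Fin (N+1), (if m ≤ k.val then omn a d N k else 0)
      = ((N+1-m : ℕ) : ℝ) * alp a d + (1/d - alp a d) * ∑ j ∈ Finset.range (N+1-m), (rr a d)^j := by
  have h0 : ∑ k : Fin (N+1), (if m ≤ k.val then omn a d N k else 0)
      = ∑ kv ∈ Finset.range (N+1), (if m ≤ kv then ff a d (N - kv) else 0) := by
    have := Fin.sum_univ_eq_sum_range (fun kv => if m ≤ kv then ff a d (N - kv) else 0) (N+1)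
    rw [← this]
    exact Finset.sum_congr rfl (fun k _ => by simp [omn])
  rw [h0, Finset.range_eq_Ico, ← Finset.sum_Ico_consecutive _ (Nat.zero_le m) hm]
  have h1 : ∑ kv ∈ Finset.Ico 0 m, (if m ≤ kv then ff a d (N - kv) else 0) = 0 := by
    apply Finset.sum_eq_zero
    intro kv hkv
    simp only [Finset.mem_Ico] at hkv
    rw [if_neg (by omega)]
  have h2 : ∑ kv ∈ Finset.Ico m (N+1), (if m ≤ kv then ff a d (N - kv) else 0)
      = ∑ l ∈ Finset.range (N+1-m), ff a d l := by
    refine Finset.sum_nbij' (fun kv => N - kv) (fun l => N - l) ?_ ?_ ?_ ?_ ?_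
    · intro kv hkv; simp only [Finset.mem_Ico] at hkv; simp only [Finset.mem_range]; omega
    · intro l hl; simp only [Finset.mem_range] at hl; simp only [Finset.mem_Ico]; omega
    · intro kv hkv; simp only [Finset.mem_Ico] at hkv; show N - (N - kv) = kv; omega
    · intro l hl; simp only [Finset.mem_range] at hl; show N - (N - l) = l; omega
    · intro kv hkv; simp only [Finset.mem_Ico] at hkv; rw [if_pos hkv.1]
  rw [h1, h2, zero_add]
  simp only [ff]
  rw [Finset.sum_add_distrib, Finset.sum_const, ← Finset.mul_sum]
  simp [mul_comm]

end Stmt11Aux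

namespace Stmt11Aux

lemma pow_decay {q : ℝ} (hq0 : 0 ≤ q) (hq1 : q < 1) (p : ℕ) (hp : 1 ≤ p) :
    q^p ≤ 1/((1-q)*p) := by
  have hp0 : (0:ℝ) < p := by exact_mod_cast hp
  have hden : (0:ℝ) < (1-q)*p := by nlinarith
  rw [le_div_iff₀ hden]
  rcases eq_or_lt_of_le hq0 with h|h
  · rw [← h, zero_pow (by omega)]
    norm_num
  · have h1 : (1:ℝ) + (p:ℕ) * (1/q - 1) ≤ (1 + (1/q - 1))^p := by
      apply one_add_mul_le_pow
      have : 0 < 1/q := by positivity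
      linarith
    have h2 : (1:ℝ) + (1/q - 1) = 1/q := by ring
    rw [h2] at h1
    have hqp : 0 < q^p := by positivity
    have h3 : ((p:ℝ)) * (1/q - 1) * q ^ p ≤ (1/q)^p * q^p := by
      nlinarith
    have h4 : (1/q)^p * q^p = 1 := by
      rw [div_pow, one_pow, div_mul_cancel₀]
      positivity
    rw [h4] at h3
    have h5 : ((p:ℝ)) * (1/q - 1) * q ^ p = (1-q)*p*q^p/q := by field_simp
    rw [h5, div_le_one h] at h3
    nlinarith
end Stmt11Aux

namespace Stmt11Aux
variable {a d x : ℝ} {N : ℕ}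

def SS (a d : ℝ) (p : ℕ) : ℝ :=
  (p:ℝ) * alp a d + (1/d - alp a d) * ∑ j ∈ Finset.range p, (rr a d)^j

lemma exp_est {x : ℝ} (hx : 0 < x) :
    |(1 - Real.exp (-x)) - x| ≤ x^2 ∧ 1 - Real.exp (-x) ≤ x := by
  have h1 : 1 - x ≤ Real.exp (-x) := by
    have := Real.add_one_le_exp (-x); linarith
  have h2 : Real.exp (-x) ≤ 1/(1+x) := by
    have h3 : 1 + x ≤ Real.exp x := by linarith [Real.add_one_le_exp x]
    have h4 : (0:ℝ) < 1 + x := by linarith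
    rw [Real.exp_neg]
    rw [inv_le_comm₀ (Real.exp_pos x) (by positivity)]
    calc (1/(1+x))⁻¹ = 1 + x := by field_simp
      _ ≤ Real.exp x := h3
  have h5 : x/(1+x) ≤ 1 - Real.exp (-x) := by
    have h4 : (0:ℝ) < 1 + x := by linarith
    have : 1 - 1/(1+x) = x/(1+x) := by field_simp; ring
    linarith [h2, this.symm.le]
  have h6 : x - x^2 ≤ x/(1+x) := by
    rw [le_div_iff₀ (by linarith)]
    nlinarith
  constructor
  · rw [abs_le]
    constructor <;> nlinarith
  · linarith

section AbstractEst
variable (ha : 0 < a) (ha1 : a < 1) (hd : 1/2 < d) (hx : 0 < x)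
  (hL : |(1 - a) - x| ≤ x^2) (hU : 1 - a ≤ x)

include ha ha1 hd in
lemma DD_gt : 1/2 < DD a d := by unfold DD; nlinarith

include ha ha1 hd in
lemma DD_le : DD a d ≤ 1 + d := by unfold DD; nlinarith

include ha ha1 hd hU in
lemma DD_near : |DD a d - 1| ≤ |d-1| * x := by
  have : DD a d - 1 = (d-1)*(1-a) := by unfold DD; ring
  rw [this, abs_mul]
  have h1 : |1 - a| = 1 - a := abs_of_nonneg (by linarith)
  rw [h1]
  exact mul_le_mul_of_nonneg_left hU (abs_nonneg _)

include ha hd in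
lemma rr_abs : |rr a d| ≤ a * (|d-1| / d) := by
  unfold rr
  rw [abs_div, abs_mul, abs_of_pos (by linarith : (0:ℝ) < d), abs_of_pos ha, mul_div_assoc]

include hd in
lemma q_lt_one : |d-1| / d < 1 := by
  rw [div_lt_one (by linarith)]
  rw [abs_lt]; constructor <;> linarith [le_abs_self (d-1), neg_abs_le (d-1)]

include ha ha1 hd hx hL hU in
lemma alp_est : |alp a d - x| ≤ 2*(1+|d-1|)*x^2 := by
  have hD := DD_gt ha ha1 hd
  have hDn := DD_near ha ha1 hd hU
  have hkey : alp a d - x = ((1 - a) - x + x*(1 - DD a d))/DD a d := by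
    unfold alp; field_simp; ring
  rw [hkey, abs_div, abs_of_pos (by linarith : (0:ℝ) < DD a d)]
  rw [div_le_iff₀ (by linarith)]
  have e2 : |x*(1 - DD a d)| ≤ x * (|d - 1| * x) := by
    rw [abs_mul, abs_of_pos hx, abs_sub_comm (1:ℝ)]
    exact mul_le_mul_of_nonneg_left hDn hx.le
  have h1 : |(1 - a) - x + x*(1 - DD a d)| ≤ x^2 + x * (|d - 1| * x) :=
    le_trans (abs_add_le _ _) (by linarith)
  have h2 : (1+|d-1|)*x^2 ≤ 2*(1+|d-1|)*x^2 * DD a d := by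
    nlinarith [sq_nonneg x, abs_nonneg (d-1), mul_nonneg (by positivity : (0:ℝ) ≤ (1+|d-1|)*x^2) (by linarith : (0:ℝ) ≤ 2*DD a d - 1)]
  nlinarith [abs_nonneg (d-1), sq_nonneg x]

include ha ha1 hd hx hU in
lemma aD2_est : |a/(DD a d)^2 - 1| ≤ 4*(1+ |d - 1| * (2+d))*x := by
  have hD := DD_gt ha ha1 hd
  have hDle := DD_le ha ha1 hd
  have hDn := DD_near ha ha1 hd hU
  have hkey : a/(DD a d)^2 - 1 = ((a - 1) + (1 - DD a d)*(1 + DD a d))/(DD a d)^2 := by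
    field_simp; ring
  rw [hkey, abs_div, abs_of_pos (by positivity : (0:ℝ) < (DD a d)^2)]
  rw [div_le_iff₀ (by positivity)]
  have h1 : |(a - 1) + (1 - DD a d)*(1 + DD a d)| ≤ x + |d - 1| * x * (2+d) := by
    calc |(a - 1) + (1 - DD a d)*(1 + DD a d)| ≤ |a-1| + |1 - DD a d| * |1 + DD a d| := by
          rw [← abs_mul]; exact abs_add_le _ _
      _ ≤ x + |d - 1| * x * (2+d) := by
          have e1 : |a-1| ≤ x := by rw [abs_sub_comm]; rw [abs_of_nonneg (by linarith)]; exact hU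
          have e2 : |1 - DD a d| ≤ |d - 1| * x := by rw [abs_sub_comm]; exact hDn
          have e3 : |1 + DD a d| ≤ 2 + d := by rw [abs_of_pos (by linarith)]; linarith
          have := mul_le_mul e2 e3 (abs_nonneg _) (by positivity)
          linarith
  have h2 : (1:ℝ)/4 ≤ (DD a d)^2 := by nlinarith
  nlinarith [abs_nonneg (d-1), mul_nonneg (mul_nonneg (abs_nonneg (d-1)) hx.le) (by linarith : (0:ℝ) ≤ 2 + d)]

include ha ha1 hd in
lemma aD2_le : a/(DD a d)^2 ≤ 4 := by
  have hD := DD_gt ha ha1 hd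
  rw [div_le_iff₀ (by positivity)]
  nlinarith

include ha ha1 hd in
lemma SS_eq (p : ℕ) : SS a d p = (p:ℝ) * alp a d + a/(DD a d)^2 * (1 - (rr a d)^p) := by
  have hD := DD_gt ha ha1 hd
  have h1 := h1r ha ha1 hd
  have hrne : rr a d ≠ 1 := by
    intro h
    rw [h] at h1
    have : DD a d = 0 := by
      field_simp at h1
      linarith [h1]
    linarith
  rw [SS, geom_sum_eq hrne]
  have hd0' : d ≠ 0 := by linarith
  have hDne : a + d * (1 - a) ≠ 0 := by
    have : DD a d = a + d * (1 - a) := rfl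
    intro h; rw [h] at this; linarith
  have hbeta : 1/d - alp a d = a/(d * DD a d) := by
    unfold alp DD
    field_simp
    ring
  have hrm : rr a d - 1 = -(DD a d/d) := by linarith [h1]
  rw [hbeta, hrm]
  have hd0 : d ≠ 0 := by linarith
  set D := DD a d with hDdef
  have hD0 : D ≠ 0 := by intro h; rw [h] at hD; norm_num at hD
  have hsc : ∀ P : ℝ, a/(d*D) * ((P - 1)/(-(D/d))) = a/D^2 * (1-P) := by
    intro P
    field_simp
    ring
  rw [hsc]

include ha ha1 hd in
lemma SS_lower (p : ℕ) (hp : 1 ≤ p) : a/(DD a d)^2 * (1 - |d-1|/d) ≤ SS a d p := by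
  have hD := DD_gt ha ha1 hd
  rw [SS_eq ha ha1 hd]
  have halp : 0 ≤ alp a d := by
    unfold alp; apply div_nonneg <;> linarith
  have hq0 : 0 ≤ |d-1|/d := by positivity
  have hq1 := q_lt_one hd
  have hrq : |rr a d| ≤ |d-1|/d := by
    have := rr_abs ha hd
    nlinarith [abs_nonneg (d-1), div_nonneg (abs_nonneg (d-1)) (by linarith : (0:ℝ) ≤ d)]
  have hpow : (rr a d)^p ≤ |d-1|/d := by
    calc (rr a d)^p ≤ |(rr a d)^p| := le_abs_self _
      _ = |rr a d|^p := by rw [abs_pow]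
      _ ≤ (|d-1|/d)^p := pow_le_pow_left₀ (abs_nonneg _) hrq p
      _ ≤ (|d-1|/d)^1 := pow_le_pow_of_le_one hq0 hq1.le hp
      _ = |d-1|/d := pow_one _
  have h1 : a/(DD a d)^2 * (1 - |d-1|/d) ≤ a/(DD a d)^2 * (1 - (rr a d)^p) := by
    apply mul_le_mul_of_nonneg_left (by linarith) (by positivity)
  nlinarith [mul_nonneg (Nat.cast_nonneg (α := ℝ) p) halp]

end AbstractEst
end Stmt11Aux

namespace Stmt11Aux

lemma GamSub {ρ T θ : ℝ} (hρ : 0 < ρ) (hT : 0 < T) {N : ℕ} (hN : 1 ≤ N) :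
    Gam ρ θ (egrid T N) - GamT ρ (egrid T N)
      = Uu (Real.exp (-(ρ*T/N))) (2*θ+1/2) N := by
  have hN0 : (0:ℝ) < N := by exact_mod_cast hN
  ext i j
  simp only [Matrix.sub_apply, Gam, GamT, Uu, Matrix.of_apply, egrid]
  rcases lt_trichotomy i j with h|h|h
  · have hij : (i:ℕ) < (j:ℕ) := h
    rw [if_pos h, if_pos h, if_neg (ne_of_lt h)]
    have hc : ((j.val - i.val : ℕ):ℝ) = (j.val:ℝ) - i.val := Nat.cast_sub hij.le
    have habs : |(i.val:ℝ)*T/N - (j.val:ℝ)*T/N| = ((j.val - i.val : ℕ):ℝ) * T/N := by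
      rw [abs_sub_comm, abs_of_pos, hc]
      · ring
      · have : (i.val:ℝ) < j.val := by exact_mod_cast hij
        have h2 : (0:ℝ) < ((j.val:ℝ) - i.val) * (T/N) := by
          apply mul_pos (by linarith) (by positivity)
        calc (0:ℝ) < ((j.val:ℝ) - i.val) * (T/N) := h2
          _ = (j.val:ℝ)*T/N - (i.val:ℝ)*T/N := by ring
    rw [habs]
    rw [← Real.exp_nat_mul]
    rw [add_zero, sub_zero]
    congr 1
    ring
  · subst h
    rw [if_pos rfl, if_neg (lt_irrefl i), if_pos rfl]
    simp [Real.exp_zero]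
    ring
  · have hji : (j:ℕ) < (i:ℕ) := h
    have hn1 : ¬ i < j := not_lt_of_gt h
    have hn2 : ¬ i = j := ne_of_gt h
    simp only [if_neg hn1, if_neg hn2]
    have : |(i.val:ℝ)*T/N - (j.val:ℝ)*T/N| = (i.val:ℝ)*T/N - (j.val:ℝ)*T/N := by
      apply abs_of_pos
      have : (j.val:ℝ) < i.val := by exact_mod_cast hji
      have h2 : (0:ℝ) < ((i.val:ℝ) - j.val) * (T/N) := by
        apply mul_pos (by linarith) (by positivity)
      calc (0:ℝ) < ((i.val:ℝ) - j.val) * (T/N) := h2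
        _ = (i.val:ℝ)*T/N - (j.val:ℝ)*T/N := by ring
    rw [this]
    ring

lemma omN_eq {ρ T θ : ℝ} (hρ : 0 < ρ) (hT : 0 < T) (hθ : 0 < θ) {N : ℕ} (hN : 1 ≤ N) :
    omN N ρ T θ = omn (Real.exp (-(ρ*T/N))) (2*θ+1/2) N := by
  have hN0 : (0:ℝ) < N := by exact_mod_cast hN
  have ha : 0 < Real.exp (-(ρ*T/N)) := Real.exp_pos _
  have ha1 : Real.exp (-(ρ*T/N)) < 1 := by
    apply Real.exp_lt_one_iff.2
    have : (0:ℝ) < ρ*T/N := by positivity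
    linarith
  have hd : (1:ℝ)/2 < 2*θ+1/2 := by linarith
  unfold omN
  rw [GamSub hρ hT hN]
  exact inv_one_eq_om ha ha1 hd

end Stmt11Aux

namespace Stmt11Aux

lemma WN_formula {ρ T θ : ℝ} (hρ : 0 < ρ) (hT : 0 < T) (hθ : 0 < θ) {N : ℕ} (hN : 1 ≤ N)
    (t : ℝ) (hm : ⌈(N:ℝ) * t / T⌉₊ ≤ N + 1) :
    WN N ρ T θ t = SS (Real.exp (-(ρ*T/N))) (2*θ+1/2) (N + 1 - ⌈(N:ℝ) * t / T⌉₊)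
      / SS (Real.exp (-(ρ*T/N))) (2*θ+1/2) (N + 1) := by
  set a := Real.exp (-(ρ*T/N)) with hadef
  set d := 2*θ+1/2 with hddef
  set m := ⌈(N:ℝ) * t / T⌉₊ with hmdef
  have hN0 : (0:ℝ) < N := by exact_mod_cast hN
  have ha : 0 < a := Real.exp_pos _
  have ha1 : a < 1 := by
    apply Real.exp_lt_one_iff.2
    have : (0:ℝ) < ρ*T/N := by positivity
    linarith
  have hd : (1:ℝ)/2 < d := by rw [hddef]; linarith
  have hom := omN_eq hρ hT hθ (N := N) hN
  have htot : ∑ k, omN N ρ T θ k = SS a d (N+1) := by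
    rw [hom]
    have h0 := sum_tail (a := a) (d := d) (N := N) 0 (by omega)
    simp only [Nat.zero_le, if_true, Nat.sub_zero] at h0
    rw [h0]; rfl
  have htail : ∑ k : Fin (N+1), (if m ≤ k.val then omN N ρ T θ k else 0) = SS a d (N+1-m) := by
    rw [hom]; rw [sum_tail m hm]; rfl
  have hq1 := q_lt_one hd
  have hlow := SS_lower ha ha1 hd (N+1) (by omega)
  have hD := DD_gt ha ha1 hd
  have hpos : 0 < SS a d (N+1) := by
    have h2 : 0 < a/(DD a d)^2 * (1 - |d-1|/d) := by
      apply mul_pos (by positivity) (by linarith)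
    linarith
  have htot0 : (∑ k, omN N ρ T θ k) ≠ 0 := by rw [htot]; exact ne_of_gt hpos
  have hsplit : ∑ k : Fin (N+1), (if k.val < m then omN N ρ T θ k else 0)
      = (∑ k, omN N ρ T θ k) - ∑ k : Fin (N+1), (if m ≤ k.val then omN N ρ T θ k else 0) := by
    rw [eq_sub_iff_add_eq, ← Finset.sum_add_distrib]
    apply Finset.sum_congr rfl
    intro k _
    by_cases hk : k.val < m
    · rw [if_pos hk, if_neg (by omega), add_zero]
    · rw [if_neg hk, if_pos (by omega), zero_add]
  unfold WN wN
  have hterm : ∀ k : Fin (N+1),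
      (if k.val < m then ((1 / ∑ k, omN N ρ T θ k) • omN N ρ T θ) k else 0)
      = (1 / ∑ k, omN N ρ T θ k) * (if k.val < m then omN N ρ T θ k else 0) := by
    intro k
    by_cases hk : k.val < m
    · rw [if_pos hk, if_pos hk]; simp
    · rw [if_neg hk, if_neg hk]; simp
  rw [Finset.sum_congr rfl (fun k _ => hterm k), ← Finset.mul_sum, hsplit, htail, htot]
  field_simp
  ring

end Stmt11Aux
namespace Stmt11Aux

lemma abs_add₄ (a b c e : ℝ) : |a+b+c+e| ≤ |a|+|b|+|c|+|e| := by
  calc |a+b+c+e| ≤ |a+b+c| + |e| := abs_add_le _ _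
    _ ≤ (|a+b| + |c|) + |e| := by linarith [abs_add_le (a+b) c]
    _ ≤ |a|+|b|+|c|+|e| := by linarith [abs_add_le a b]

lemma SS_target {ρ T θ : ℝ} (hρ : 0 < ρ) (hT : 0 < T) (hθ : 0 < θ) (t : ℝ) (ht0 : 0 ≤ t) (htT : t < T) :
    ∃ C, 0 ≤ C ∧ ∀ N : ℕ, 2 ≤ N → ∀ p : ℕ, 1 ≤ p → (p:ℝ) ≤ (N:ℝ) + 1 →
      (N:ℝ)*(T-t)/T ≤ p → (p:ℝ) ≤ (N:ℝ)*(T-t)/T + 1 →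
      |SS (Real.exp (-(ρ*T/N))) (2*θ+1/2) p - (ρ*(T-t)+1)| ≤ C/N := by
  set d := 2*θ+1/2 with hddef
  have hd : (1:ℝ)/2 < d := by rw [hddef]; linarith
  clear_value d
  have hd0 : (0:ℝ) < d := lt_trans one_half_pos hd
  have hq1 : |d - 1|/d < 1 := q_lt_one hd
  have hq0 : (0:ℝ) ≤ |d - 1|/d := div_nonneg (abs_nonneg _) hd0.le
  have htt : (0:ℝ) < T - t := by linarith
  refine ⟨4*(1+|d - 1|)*(ρ*T)^2 + ρ*T + 4*(1+ |d - 1| * (2+d))*(ρ*T) + 4*T/((1- |d - 1|/d)*(T-t)), ?_, ?_⟩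
  · have h1 : (0:ℝ) < 1 - |d - 1|/d := by linarith
    have h2 : (0:ℝ) ≤ 4*T/((1- |d - 1|/d)*(T-t)) :=
      div_nonneg (by linarith) (le_of_lt (mul_pos h1 htt))
    have h3 : (0:ℝ) ≤ 4*(1+|d - 1|)*(ρ*T)^2 + ρ*T + 4*(1+ |d - 1| * (2+d))*(ρ*T) := by positivity
    linarith
  intro N hN p hp1 hpN hplo hphi
  have hN' : 0 < N := by omega
  have hN0 : (0:ℝ) < N := by exact_mod_cast hN'
  have hN2 : (2:ℝ) ≤ N := by exact_mod_cast hN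
  set x := ρ*T/(N:ℝ) with hxdef
  have hx : 0 < x := by rw [hxdef]; positivity
  obtain ⟨hL, hU⟩ := exp_est hx
  set a := Real.exp (-x) with hadef
  have ha : 0 < a := Real.exp_pos _
  have ha1 : a < 1 := by
    rw [hadef]
    apply Real.exp_lt_one_iff.2
    linarith
  have hp0 : (0:ℝ) < p := by exact_mod_cast hp1
  clear_value x a
  have halp := alp_est ha ha1 hd hx hL hU
  have haD2 := aD2_est ha ha1 hd hx hU
  have haD4 := aD2_le ha ha1 hd
  have haD0 : 0 ≤ a/(DD a d)^2 := by
    have := DD_gt ha ha1 hd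
    positivity
  have hrq : |rr a d| ≤ |d - 1|/d := by
    have h1 := rr_abs ha hd
    nlinarith
  have hrp : |(rr a d)^p| ≤ 1/((1 - |d - 1|/d)*p) := by
    rw [abs_pow]
    calc |rr a d|^p ≤ (|d - 1|/d)^p := pow_le_pow_left₀ (abs_nonneg _) hrq p
      _ ≤ 1/((1 - |d - 1|/d)*p) := pow_decay hq0 hq1 p hp1
  -- piece bounds
  have hB1 : |(p:ℝ)*(alp a d - x)| ≤ (4*(1+|d - 1|)*(ρ*T)^2)/N := by
    rw [abs_mul, abs_of_pos hp0]
    have h1 : (p:ℝ)*|alp a d - x| ≤ (2*N)*(2*(1+|d - 1|)*x^2) := by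
      apply mul_le_mul (by linarith) halp (abs_nonneg _) (by linarith)
    have h2 : (2*(N:ℝ))*(2*(1+|d - 1|)*x^2) = (4*(1+|d - 1|)*(ρ*T)^2)/N := by
      rw [hxdef]; field_simp; ring
    linarith
  have hB2 : |(p:ℝ)*x - ρ*(T-t)| ≤ (ρ*T)/N := by
    have h1 : ρ*(T-t) = x*((N:ℝ)*(T-t)/T) := by rw [hxdef]; field_simp
    have h2 : (p:ℝ)*x - ρ*(T-t) = x*((p:ℝ) - (N:ℝ)*(T-t)/T) := by rw [h1]; ring
    rw [h2, abs_mul, abs_of_pos hx]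
    have h3 : |(p:ℝ) - (N:ℝ)*(T-t)/T| ≤ 1 := by
      rw [abs_le]; constructor <;> linarith
    calc x*|(p:ℝ) - (N:ℝ)*(T-t)/T| ≤ x*1 := mul_le_mul_of_nonneg_left h3 hx.le
      _ = (ρ*T)/N := by rw [hxdef]; ring
  have hB3 : |a/(DD a d)^2 - 1| ≤ (4*(1+ |d - 1| * (2+d))*(ρ*T))/N := by
    have h2 : 4*(1+ |d - 1| * (2+d))*x = (4*(1+ |d - 1| * (2+d))*(ρ*T))/N := by
      rw [hxdef]; ring
    linarith
  have hB4 : |a/(DD a d)^2 * (rr a d)^p| ≤ (4*T/((1- |d - 1|/d)*(T-t)))/N := by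
    rw [abs_mul]
    have h1 : |a/(DD a d)^2| = a/(DD a d)^2 := abs_of_nonneg haD0
    rw [h1]
    have h2 : a/(DD a d)^2 * |(rr a d)^p| ≤ 4 * (1/((1 - |d - 1|/d)*p)) := by
      apply mul_le_mul haD4 hrp (abs_nonneg _) (by norm_num)
    have h5 : (0:ℝ) < 1 - |d - 1|/d := by linarith
    have h4 : (N:ℝ)*(T-t) ≤ T*p := by
      rw [div_le_iff₀ hT] at hplo
      linarith
    have hstep : 1/(p:ℝ) ≤ T/((T-t)*N) := by
      rw [div_le_div_iff₀ hp0 (mul_pos htt hN0)]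
      linarith
    have h3 : 1/((1 - |d - 1|/d)*p) ≤ (T/((1- |d - 1|/d)*(T-t)))/N := by
      calc 1/((1 - |d - 1|/d)*p) = (1/(1 - |d - 1|/d))*(1/(p:ℝ)) := by
            rw [one_div, mul_inv, one_div, one_div]
        _ ≤ (1/(1 - |d - 1|/d))*(T/((T-t)*N)) :=
            mul_le_mul_of_nonneg_left hstep (le_of_lt (one_div_pos.mpr h5))
        _ = (T/((1- |d - 1|/d)*(T-t)))/N := by
            field_simp
    calc a/(DD a d)^2 * |(rr a d)^p| ≤ 4*(1/((1 - |d - 1|/d)*p)) := h2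
      _ ≤ 4*((T/((1- |d - 1|/d)*(T-t)))/N) := by linarith
      _ = (4*T/((1- |d - 1|/d)*(T-t)))/N := by ring
  have hdecomp : SS a d p - (ρ*(T-t)+1)
      = ((p:ℝ)*(alp a d - x)) + ((p:ℝ)*x - ρ*(T-t)) + (a/(DD a d)^2 - 1)
        + (-(a/(DD a d)^2 * (rr a d)^p)) := by
    rw [SS_eq ha ha1 hd]; ring
  rw [hdecomp]
  have habs4 : |(-(a/(DD a d)^2 * (rr a d)^p))| = |a/(DD a d)^2 * (rr a d)^p| := abs_neg _
  refine le_trans (abs_add₄ _ _ _ _) ?_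
  have hsum : (4*(1+|d - 1|)*(ρ*T)^2)/(N:ℝ) + (ρ*T)/N + (4*(1+ |d - 1| * (2+d))*(ρ*T))/N
        + (4*T/((1- |d - 1|/d)*(T-t)))/N
      = (4*(1+|d - 1|)*(ρ*T)^2 + ρ*T + 4*(1+ |d - 1| * (2+d))*(ρ*T) + 4*T/((1- |d - 1|/d)*(T-t)))/N := by
    ring
  linarith [hB1, hB2, hB3, hB4, habs4]

lemma SS_low_conc {ρ T θ : ℝ} (hρ : 0 < ρ) (hT : 0 < T) (hθ : 0 < θ) (N : ℕ) (hN : 2 ≤ N)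
    (p : ℕ) (hp : 1 ≤ p) :
    Real.exp (-(ρ*T/2)) * (1 - |2*θ+1/2 - 1|/(2*θ+1/2)) / (1+(2*θ+1/2))^2
      ≤ SS (Real.exp (-(ρ*T/N))) (2*θ+1/2) p := by
  set d := 2*θ+1/2 with hddef
  have hd : (1:ℝ)/2 < d := by rw [hddef]; linarith
  clear_value d
  have hd0 : (0:ℝ) < d := lt_trans one_half_pos hd
  have hq1 : |d - 1|/d < 1 := q_lt_one hd
  have hq0 : (0:ℝ) ≤ |d - 1|/d := div_nonneg (abs_nonneg _) hd0.le
  have hN' : 0 < N := by omega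
  have hN0 : (0:ℝ) < N := by exact_mod_cast hN'
  have hN2 : (2:ℝ) ≤ N := by exact_mod_cast hN
  set a := Real.exp (-(ρ*T/N)) with hadef
  have ha : 0 < a := Real.exp_pos _
  have ha1 : a < 1 := by
    rw [hadef]
    apply Real.exp_lt_one_iff.2
    have : (0:ℝ) < ρ*T/N := by positivity
    linarith
  clear_value a
  have hD := DD_gt ha ha1 hd
  have hDle := DD_le ha ha1 hd
  have hamin : Real.exp (-(ρ*T/2)) ≤ a := by
    rw [hadef]
    apply Real.exp_le_exp.2
    have : ρ*T/N ≤ ρ*T/2 := by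
      apply div_le_div_of_nonneg_left (by positivity) (by norm_num) hN2
    linarith
  have h1 : Real.exp (-(ρ*T/2)) / (1+d)^2 ≤ a/(DD a d)^2 := by
    apply div_le_div₀ (le_of_lt ha) hamin (by positivity)
    nlinarith
  have h2 := SS_lower ha ha1 hd p hp
  have h3 : Real.exp (-(ρ*T/2)) * (1 - |d - 1|/d) / (1+d)^2
      ≤ a/(DD a d)^2 * (1 - |d - 1|/d) := by
    have e : Real.exp (-(ρ*T/2)) * (1 - |d - 1|/d) / (1+d)^2
        = (Real.exp (-(ρ*T/2))/(1+d)^2) * (1 - |d - 1|/d) := by ring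
    rw [e]
    apply mul_le_mul_of_nonneg_right h1 (by linarith)
  linarith

end Stmt11Aux
namespace Stmt11Aux

lemma tendsto_of_rate {g : ℕ → ℝ} {l C : ℝ} (h : ∀ N : ℕ, 2 ≤ N → (N:ℝ)*|g N - l| ≤ C) :
    Filter.Tendsto g Filter.atTop (nhds l) := by
  rw [tendsto_iff_dist_tendsto_zero]
  apply squeeze_zero' (g := fun N : ℕ => C/(N:ℝ))
  · exact Filter.Eventually.of_forall (fun _ => dist_nonneg)
  · filter_upwards [Filter.eventually_ge_atTop 2] with N hN
    have hN0 : (0:ℝ) < N := by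
      have : 0 < N := by omega
      exact_mod_cast this
    rw [Real.dist_eq, le_div_iff₀ hN0, mul_comm]
    exact h N hN
  · exact tendsto_const_div_atTop_nhds_zero_nat C

lemma frac_bound {X Y A B L C₁ C₂ n : ℝ} (hB : 0 < B) (hA : 0 < A) (hL : 0 < L) (hn : 0 < n)
    (hY : L ≤ Y) (h1 : |X - A| ≤ C₁/n) (h2 : |Y - B| ≤ C₂/n) :
    n * |X/Y - A/B| ≤ (B*C₁ + A*C₂)/(L*B) := by
  have hY0 : 0 < Y := lt_of_lt_of_le hL hY
  have e : X/Y - A/B = (B*(X-A) - A*(Y-B))/(Y*B) := by field_simp; ring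
  rw [e, abs_div, abs_of_pos (mul_pos hY0 hB)]
  have hnum : |B*(X-A) - A*(Y-B)| ≤ (B*C₁ + A*C₂)/n := by
    calc |B*(X-A) - A*(Y-B)| ≤ |B*(X-A)| + |A*(Y-B)| := abs_sub _ _
      _ = B*|X-A| + A*|Y-B| := by rw [abs_mul, abs_mul, abs_of_pos hB, abs_of_pos hA]
      _ ≤ B*(C₁/n) + A*(C₂/n) := by
          have u1 := mul_le_mul_of_nonneg_left h1 hB.le
          have u2 := mul_le_mul_of_nonneg_left h2 hA.le
          linarith
      _ = (B*C₁ + A*C₂)/n := by ring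
  have hc : 0 ≤ (B*C₁ + A*C₂)/n := le_trans (abs_nonneg _) hnum
  have h3 : |B*(X-A) - A*(Y-B)|/(Y*B) ≤ ((B*C₁ + A*C₂)/n)/(L*B) :=
    div_le_div₀ hc hnum (mul_pos hL hB) (mul_le_mul_of_nonneg_right hY hB.le)
  calc n * (|B*(X-A) - A*(Y-B)|/(Y*B)) ≤ n * (((B*C₁ + A*C₂)/n)/(L*B)) :=
        mul_le_mul_of_nonneg_left h3 hn.le
    _ = (B*C₁+A*C₂)/(L*B) := by
        field_simp

end Stmt11Aux
open Stmt11Aux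

/-- Convergence of the zero-net-supply inventories `W^{(N)}_t` to `𝕗(t)` at rate `1/N` for
`t ∈ [0,T)`, and of `W^{(N)}_T` to `1/((2θ+1/2)(ρT+1))`, for `θ > 0`. -/
theorem stmt11 (n : ℕ) (hn : 2 ≤ n) (ρ T θ : ℝ) (hρ : 0 < ρ) (hT : 0 < T) (hθ : 0 < θ)
    (f : ℝ → ℝ) (hf : ∀ t : ℝ, f t = (ρ * (T - t) + 1) / (ρ * T + 1)) :
    (∀ t : ℝ, 0 ≤ t → t < T →
      (∃ C : ℝ, ∀ N : ℕ, 2 ≤ N → (N : ℝ) * |WN N ρ T θ t - f t| ≤ C) ∧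
      Tendsto (fun N : ℕ => WN N ρ T θ t) atTop (nhds (f t))) ∧
    (∃ C : ℝ, ∀ N : ℕ, 2 ≤ N →
      (N : ℝ) * |WN N ρ T θ T - 1 / ((2 * θ + 1 / 2) * (ρ * T + 1))| ≤ C) ∧
    Tendsto (fun N : ℕ => WN N ρ T θ T) atTop
      (nhds (1 / ((2 * θ + 1 / 2) * (ρ * T + 1)))) := by
  have hd : (1:ℝ)/2 < 2*θ+1/2 := by linarith
  have hd0 : (0:ℝ) < 2*θ+1/2 := by linarith
  have hρT : 0 < ρ*T := mul_pos hρ hT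
  have hB : (0:ℝ) < ρ*T+1 := by linarith
  obtain ⟨C₂, hC₂0, hC₂⟩ := SS_target hρ hT hθ 0 le_rfl hT
  have hq1 : |2*θ+1/2 - 1|/(2*θ+1/2) < 1 := q_lt_one hd
  have hL0 : 0 < Real.exp (-(ρ*T/2)) * (1 - |2*θ+1/2 - 1|/(2*θ+1/2)) / (1+(2*θ+1/2))^2 :=
    div_pos (mul_pos (Real.exp_pos _) (by linarith)) (by positivity)
  have htot_cond : ∀ N : ℕ, 2 ≤ N →
      |SS (Real.exp (-(ρ*T/N))) (2*θ+1/2) (N+1) - (ρ*T+1)| ≤ C₂/N := by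
    intro N hN
    have hN0 : (0:ℝ) < N := by exact_mod_cast (show 0 < N by omega)
    have hNT : (N:ℝ)*(T-0)/T = N := by field_simp; ring
    have h := hC₂ N hN (N+1) (by omega) (by push_cast; linarith)
      (by rw [hNT]; push_cast; linarith) (by rw [hNT]; push_cast; linarith)
    have he : ρ*(T-0)+1 = ρ*T+1 := by ring
    rwa [he] at h
  constructor
  · intro t ht0 htT
    obtain ⟨C₁, hC₁0, hC₁⟩ := SS_target hρ hT hθ t ht0 htT
    have hA : (0:ℝ) < ρ*(T-t)+1 := by nlinarith
    have hbound : ∀ N : ℕ, 2 ≤ N → (N:ℝ)*|WN N ρ T θ t - f t| ≤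
        ((ρ*T+1)*C₁ + (ρ*(T-t)+1)*C₂)
          / ((Real.exp (-(ρ*T/2)) * (1 - |2*θ+1/2 - 1|/(2*θ+1/2)) / (1+(2*θ+1/2))^2)*(ρ*T+1)) := by
      intro N hN
      have hN1 : 1 ≤ N := by omega
      have hN0 : (0:ℝ) < N := by exact_mod_cast (show 0 < N by omega)
      set m := ⌈(N:ℝ)*t/T⌉₊ with hmdef
      have hu0 : 0 ≤ (N:ℝ)*t/T := by positivity
      have hmu : (N:ℝ)*t/T ≤ m := Nat.le_ceil _
      have hm1 : (m:ℝ) < (N:ℝ)*t/T + 1 := Nat.ceil_lt_add_one hu0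
      have huN : (N:ℝ)*t/T < N := by rw [div_lt_iff₀ hT]; nlinarith
      have hmN : m ≤ N := by
        have h2 : (m:ℝ) < ((N+1:ℕ):ℝ) := by push_cast; linarith
        have h3 : m < N+1 := by exact_mod_cast h2
        omega
      have hm0 : (0:ℝ) ≤ m := Nat.cast_nonneg m
      have hpcast : ((N+1-m : ℕ):ℝ) = (N:ℝ)+1-m := by
        rw [Nat.cast_sub (by omega)]; push_cast; ring
      have hfrac : (N:ℝ)*(T-t)/T = N - (N:ℝ)*t/T := by field_simp
      have hS1 : |SS (Real.exp (-(ρ*T/N))) (2*θ+1/2) (N+1-m) - (ρ*(T-t)+1)| ≤ C₁/N := by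
        apply hC₁ N hN (N+1-m) (by omega) ?_ ?_ ?_
        · rw [hpcast]; linarith
        · rw [hpcast, hfrac]; linarith
        · rw [hpcast, hfrac]; linarith
      have hS2 := htot_cond N hN
      have hlow := SS_low_conc hρ hT hθ N hN (N+1) (by omega)
      rw [WN_formula hρ hT hθ hN1 t (by omega), hf t]
      exact frac_bound hB hA hL0 hN0 hlow hS1 hS2
    exact ⟨⟨_, hbound⟩, tendsto_of_rate hbound⟩
  · have hA : (0:ℝ) < 1/(2*θ+1/2) := by positivity
    have hbound : ∀ N : ℕ, 2 ≤ N →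
        (N:ℝ)*|WN N ρ T θ T - 1/((2*θ+1/2)*(ρ*T+1))| ≤
        ((ρ*T+1)*0 + (1/(2*θ+1/2))*C₂)
          / ((Real.exp (-(ρ*T/2)) * (1 - |2*θ+1/2 - 1|/(2*θ+1/2)) / (1+(2*θ+1/2))^2)*(ρ*T+1)) := by
      intro N hN
      have hN1 : 1 ≤ N := by omega
      have hN0 : (0:ℝ) < N := by exact_mod_cast (show 0 < N by omega)
      have hmT : ⌈(N:ℝ)*T/T⌉₊ = N := by
        rw [mul_div_assoc, div_self (ne_of_gt hT), mul_one, Nat.ceil_natCast]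
      have hWT : WN N ρ T θ T
          = SS (Real.exp (-(ρ*T/N))) (2*θ+1/2) 1
            / SS (Real.exp (-(ρ*T/N))) (2*θ+1/2) (N+1) := by
        rw [WN_formula hρ hT hθ hN1 T (by rw [hmT]; omega), hmT]
        congr 2
        omega
      have hone : SS (Real.exp (-(ρ*T/N))) (2*θ+1/2) 1 = 1/(2*θ+1/2) := by
        simp [SS, Finset.sum_range_one]
      have hS1 : |SS (Real.exp (-(ρ*T/N))) (2*θ+1/2) 1 - 1/(2*θ+1/2)| ≤ 0/(N:ℝ) := by
        rw [hone]
        simp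
      have hS2 := htot_cond N hN
      have hlow := SS_low_conc hρ hT hθ N hN (N+1) (by omega)
      have htgt : 1/((2*θ+1/2)*(ρ*T+1)) = (1/(2*θ+1/2))/(ρ*T+1) := by
        rw [div_div]
      rw [hWT, htgt]
      exact frac_bound hB hA hL0 hN0 hlow hS1 hS2
    exact ⟨⟨_, hbound⟩, tendsto_of_rate hbound⟩
end
end

section
/- Let n ≥ 2 be an integer, ρ > 0, T > 0, and θ = 0. Define φ_±(t) := (1 + ρ(T−t) ± e^{−ρ(T−t)})/(1 + ρT + e^{−ρT}) and ψ_±(t) := (1 + ρ(T−t) ± e^{−ρ(T−t)})/(1 + ρT − e^{−ρT}). Then W_0^{(N)} = 1 for every N; for every t ∈ (0,T) the set of cluster points of (W_t^{(2N)})_{N∈ℕ} is exactly {φ_+(t), φ_−(t)} and the set of cluster points of (W_t^{(2N+1)})_{N∈ℕ} is exactly {ψ_+(t), ψ_−(t)}; and at t = T one has W_T^{(2N)} → φ_+(T) and W_T^{(2N+1)} → ψ_+(T) as N → ∞. -/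
open Matrix Finset Filter

noncomputable section

def qq (ρ T : ℝ) (N : ℕ) : ℝ := Real.exp (-(ρ * T / N))

def cOm (q : ℝ) (N : ℕ) : Fin (N+1) → ℝ :=
  fun k => 2*(1-q)/(1+q) + (4*q/(1+q)) * (-q)^(N - k.val)


lemma osc (x c : ℝ)
    (h : ∀ K K' : ℕ, |(((⌈c + K*x⌉ : ℤ) : ℝ) - (c + K*x)) - (((⌈c + K'*x⌉ : ℤ) : ℝ) - (c + K'*x))| < 1/2) :
    ∃ z : ℤ, x = z := by
  set d : ℕ → ℝ := fun K => ((⌈c + K*x⌉ : ℤ) : ℝ) - (c + K*x) with hd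
  have add : ∀ K K' : ℕ, d (K + K') = d K + d K' - d 0 := by
    intro K K'
    set z : ℤ := ⌈c + (K:ℕ)*x⌉ + ⌈c + (K':ℕ)*x⌉ - ⌈c + ((K+K' : ℕ):ℝ)*x⌉ - ⌈c + ((0:ℕ):ℝ)*x⌉ with hzdef
    have hz : ((z : ℤ) : ℝ) = (d K - d 0) + (d K' - d (K+K')) := by
      simp only [hd, hzdef]; push_cast; ring
    have habs : |((z : ℤ) : ℝ)| < 1 := by
      rw [hz]
      calc |(d K - d 0) + (d K' - d (K+K'))| ≤ |d K - d 0| + |d K' - d (K+K')| := abs_add_le _ _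
        _ < 1/2 + 1/2 := add_lt_add (h K 0) (h K' (K+K'))
        _ = 1 := by norm_num
    have hz0 : z = 0 := by
      have h' : |z| < 1 := by exact_mod_cast habs
      rw [abs_lt] at h'
      omega
    have := hz
    rw [hz0] at this
    simp at this
    linarith
  have lin : ∀ K : ℕ, d K - d 0 = K * (d 1 - d 0) := by
    intro K
    induction K with
    | zero => simp
    | succ K ih =>
      have := add K 1
      push_cast
      rw [this]; rw [sub_eq_iff_eq_add] at ih; rw [ih]; ring
  have h1 : d 1 = d 0 := by
    by_contra hne
    have hpos : 0 < |d 1 - d 0| := by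
      rw [abs_pos]; intro hc; apply hne; linarith
    obtain ⟨K, hK⟩ := exists_nat_ge ((1/2) / |d 1 - d 0|)
    have h2 : (1/2 : ℝ) ≤ K * |d 1 - d 0| := by
      rw [div_le_iff₀ hpos] at hK; linarith
    have h3 : |d K - d 0| < 1/2 := h K 0
    rw [lin K, abs_mul, abs_of_nonneg (by positivity : (0:ℝ) ≤ (K:ℝ))] at h3
    linarith
  refine ⟨⌈c + ((1:ℕ):ℝ)*x⌉ - ⌈c + ((0:ℕ):ℝ)*x⌉, ?_⟩
  have : d 1 = d 0 := h1
  simp only [hd] at this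
  push_cast at this ⊢
  push_cast
  linarith

lemma osc' (x c : ℝ) (hx0 : 0 < x) (hx1 : x < 1) (lo : ℝ)
    (h : ∀ K : ℕ, (((⌈c + K*x⌉ : ℤ) : ℝ) - (c + K*x)) ∈ Set.Ico lo (lo + 1/2)) : False := by
  obtain ⟨z, hz⟩ := osc x c (by
    intro K K'
    have h1 := h K; have h2 := h K'
    rw [Set.mem_Ico] at h1 h2
    rw [abs_lt]; constructor <;> linarith)
  have hz0 : (0:ℝ) < (z:ℝ) := hz ▸ hx0
  have hz1 : ((z:ℝ)) < 1 := hz ▸ hx1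
  have : (0:ℤ) < z := by exact_mod_cast hz0
  have : (z:ℤ) < 1 := by exact_mod_cast hz1
  omega

lemma even_ceil_two_mul (z : ℝ) : Even ⌈2*z⌉ ↔ ((⌈z⌉ : ℤ) : ℝ) - z < 1/2 := by
  have hle := Int.le_ceil z
  have hlt := Int.ceil_lt_add_one z
  constructor
  · intro hev
    by_contra hge
    push_neg at hge
    have : ⌈2*z⌉ = 2*⌈z⌉ - 1 := by
      rw [Int.ceil_eq_iff]
      constructor
      · push_cast; linarith
      · push_cast; linarith
    rw [this] at hev
    rcases hev with ⟨r, hr⟩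
    omega
  · intro hlt2
    have : ⌈2*z⌉ = 2*⌈z⌉ := by
      rw [Int.ceil_eq_iff]
      constructor
      · push_cast; linarith
      · push_cast; linarith
    rw [this]
    exact ⟨⌈z⌉, by ring⟩

lemma freq_even (x c : ℝ) (hx0 : 0 < x) (hx1 : x < 1) :
    ∃ᶠ M : ℕ in atTop, Even ⌈2*(c + M*x)⌉ := by
  by_contra hfin
  rw [not_frequently] at hfin
  obtain ⟨B, hB⟩ := eventually_atTop.mp hfin
  refine osc' x (c + B*x) hx0 hx1 (1/2) ?_
  intro K
  have hB' : ¬ Even ⌈2*(c + ((B+K:ℕ):ℝ)*x)⌉ := hB (B+K) (Nat.le_add_right _ _)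
  rw [even_ceil_two_mul] at hB'
  push_neg at hB'
  have heq : c + B*x + K*x = c + ((B+K:ℕ):ℝ)*x := by push_cast; ring
  rw [Set.mem_Ico, heq]
  have hlt := Int.ceil_lt_add_one (c + ((B+K:ℕ):ℝ)*x)
  constructor
  · linarith
  · linarith

lemma freq_odd (x c : ℝ) (hx0 : 0 < x) (hx1 : x < 1) :
    ∃ᶠ M : ℕ in atTop, ¬ Even ⌈2*(c + M*x)⌉ := by
  by_contra hfin
  rw [not_frequently] at hfin
  push_neg at hfin
  obtain ⟨B, hB⟩ := eventually_atTop.mp hfin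
  refine osc' x (c + B*x) hx0 hx1 0 ?_
  intro K
  have hB' : Even ⌈2*(c + ((B+K:ℕ):ℝ)*x)⌉ := hB (B+K) (Nat.le_add_right _ _)
  rw [even_ceil_two_mul] at hB'
  have heq : c + B*x + K*x = c + ((B+K:ℕ):ℝ)*x := by push_cast; ring
  rw [Set.mem_Ico, heq]
  have hle := Int.le_ceil (c + ((B+K:ℕ):ℝ)*x)
  constructor
  · linarith
  · linarith

lemma qq_pos (ρ T : ℝ) (N : ℕ) : 0 < qq ρ T N := Real.exp_pos _

lemma qq_lt_one (ρ T : ℝ) (hρ : 0 < ρ) (hT : 0 < T) (N : ℕ) (hN : 1 ≤ N) :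
    qq ρ T N < 1 := by
  rw [qq, Real.exp_lt_one_iff]
  have hN' : (0:ℝ) < N := by exact_mod_cast hN
  have : 0 < ρ * T / N := by positivity
  linarith

lemma matA_apply (ρ T : ℝ) (hT : 0 < T) (N : ℕ) (i j : Fin (N+1)) :
    (Gam ρ 0 (egrid T N) - GamT ρ (egrid T N)) i j =
      if i = j then 1/2 else if i < j then (qq ρ T N)^(j.val - i.val) else 0 := by
  have hTN : (0:ℝ) ≤ T / N := by positivity
  rcases lt_trichotomy i j with h | h | h
  · have hij : i ≠ j := ne_of_lt h
    have hvlt : (i.val : ℝ) ≤ j.val := by exact_mod_cast h.le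
    simp only [Gam, GamT, Matrix.sub_apply, Matrix.of_apply, if_pos h, if_neg hij,
      if_neg (not_lt_of_gt h), mul_zero, add_zero, sub_zero]
    have habs : |egrid T N i - egrid T N j| = ((j.val - i.val : ℕ) : ℝ) * (T / N) := by
      rw [abs_of_nonpos, Nat.cast_sub h.le]
      · simp only [egrid]; ring
      · simp only [egrid]
        have h2 : (i.val : ℝ) * (T / N) ≤ (j.val : ℝ) * (T / N) :=
          mul_le_mul_of_nonneg_right hvlt hTN
        rw [mul_div_assoc, mul_div_assoc] at *
        linarith
    rw [habs, qq, ← Real.exp_nat_mul]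
    congr 1
    ring
  · simp only [Gam, GamT, Matrix.sub_apply, Matrix.of_apply, h, if_pos rfl,
      lt_irrefl, if_neg (lt_irrefl j)]
    norm_num
  · have hij : i ≠ j := ne_of_gt h
    have hvlt : (j.val : ℝ) ≤ i.val := by exact_mod_cast h.le
    simp only [Gam, GamT, Matrix.sub_apply, Matrix.of_apply, if_neg hij,
      if_neg (not_lt_of_gt h), if_neg (not_lt_of_gt h), mul_zero, add_zero]
    have habs : |egrid T N i - egrid T N j| = egrid T N i - egrid T N j := by
      rw [abs_of_nonneg]
      simp only [egrid]
      have h2 : (j.val : ℝ) * (T / N) ≤ (i.val : ℝ) * (T / N) :=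
        mul_le_mul_of_nonneg_right hvlt hTN
      rw [mul_div_assoc, mul_div_assoc] at *
      linarith
    rw [habs]
    ring

lemma matA_mulVec (ρ T : ℝ) (hρ : 0 < ρ) (hT : 0 < T) (N : ℕ) (hN : 1 ≤ N) :
    (Gam ρ 0 (egrid T N) - GamT ρ (egrid T N)).mulVec (cOm (qq ρ T N) N) = 1 := by
  set q := qq ρ T N with hqdef
  have hq0 : 0 < q := qq_pos ρ T N
  have hq1 : q < 1 := qq_lt_one ρ T hρ hT N hN
  have hqne1 : q ≠ 1 := ne_of_lt hq1
  have hq1pos : (0:ℝ) < 1 + q := by linarith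
  funext i
  simp only [Matrix.mulVec, dotProduct, Pi.one_apply]
  set c : ℝ := 2*(1-q)/(1+q) with hc
  set a : ℝ := 4*q/(1+q) with ha
  set f : ℕ → ℝ := fun j =>
    (if i.val = j then 1/2 else if i.val < j then q^(j - i.val) else 0) *
      (c + a * (-q)^(N - j)) with hf
  have hterm : ∀ j : Fin (N+1),
      (Gam ρ 0 (egrid T N) - GamT ρ (egrid T N)) i j * cOm q N j = f j.val := by
    intro j
    rw [matA_apply ρ T hT N i j]
    simp only [hf, cOm, Fin.ext_iff, Fin.lt_def, hc, ha, hqdef]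
  calc (∑ j, (Gam ρ 0 (egrid T N) - GamT ρ (egrid T N)) i j * cOm q N j)
      = ∑ j : Fin (N+1), f j.val := by exact Finset.sum_congr rfl (fun j _ => hterm j)
    _ = ∑ j ∈ Finset.range (N+1), f j := Fin.sum_univ_eq_sum_range f (N+1)
    _ = ∑ j ∈ Finset.Ico 0 (i.val+1), f j + ∑ j ∈ Finset.Ico (i.val+1) (N+1), f j := by
        rw [Finset.range_eq_Ico, ← Finset.sum_Ico_consecutive f (Nat.zero_le _)
          (by omega : i.val + 1 ≤ N + 1)]
    _ = 1 := by
        set L := N - i.val with hLdef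
        have hiN : i.val ≤ N := by omega
        have hsum1 : ∑ j ∈ Finset.Ico 0 (i.val+1), f j = (1/2) * (c + a*(-q)^L) := by
          rw [Finset.sum_eq_single_of_mem i.val (by rw [Finset.mem_Ico]; omega)]
          · simp [hf, hLdef]
          · intro b hb hne
            rw [Finset.mem_Ico] at hb
            simp only [hf]
            rw [if_neg (by omega), if_neg (by omega), zero_mul]
        have hsum2 : ∑ j ∈ Finset.Ico (i.val+1) (N+1), f j
            = c*q*(∑ r ∈ Finset.range L, q^r)
              + a*q^L*(∑ r ∈ Finset.range L, (-1:ℝ)^(L-1-r)) := by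
          rw [Finset.sum_Ico_eq_sum_range]
          have hcard : N + 1 - (i.val + 1) = L := by omega
          rw [hcard, Finset.mul_sum, Finset.mul_sum, ← Finset.sum_add_distrib]
          refine Finset.sum_congr rfl ?_
          intro r hr
          rw [Finset.mem_range] at hr
          simp only [hf]
          rw [if_neg (by omega), if_pos (by omega)]
          have h1 : i.val + 1 + r - i.val = r + 1 := by omega
          have h2 : N - (i.val + 1 + r) = L - 1 - r := by omega
          rw [h1, h2, neg_pow q (L-1-r)]
          have hpow : q^(r+1) * q^(L-1-r) = q^L := by
            rw [← pow_add]; congr 1; omega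
          calc q^(r+1) * (c + a*((-1:ℝ)^(L-1-r) * q^(L-1-r)))
              = c*q*q^r + a*(-1:ℝ)^(L-1-r)*(q^(r+1)*q^(L-1-r)) := by rw [pow_succ]; ring
            _ = c*q*q^r + a*q^L*(-1:ℝ)^(L-1-r) := by rw [hpow]; ring
        rw [hsum1, hsum2, Finset.sum_range_reflect (fun s => (-1:ℝ)^s) L,
          geom_sum_eq hqne1 L, geom_sum_eq (by norm_num : (-1:ℝ) ≠ 1) L,
          neg_pow q L]
        set Q := q^L
        set E := (-1:ℝ)^L
        rw [hc, ha]
        have hqm1 : q - 1 ≠ 0 := by intro h; apply hqne1; linarith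
        have hqp1 : 1 + q ≠ 0 := ne_of_gt hq1pos
        field_simp
        ring

lemma omN_eq (ρ T : ℝ) (hρ : 0 < ρ) (hT : 0 < T) (N : ℕ) (hN : 1 ≤ N) :
    omN N ρ T 0 = cOm (qq ρ T N) N := by
  set A := Gam ρ 0 (egrid T N) - GamT ρ (egrid T N) with hA
  have htri : A.BlockTriangular id := by
    intro i j hij
    rw [hA, matA_apply ρ T hT N i j, if_neg, if_neg]
    · exact not_lt_of_gt hij
    · exact ne_of_gt hij
  have hdet : IsUnit A.det := by
    rw [Matrix.det_of_upperTriangular htri]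
    have : ∀ i : Fin (N+1), A i i = 1/2 := by
      intro i; rw [hA, matA_apply ρ T hT N i i, if_pos rfl]
    rw [Finset.prod_congr rfl (fun i _ => this i), Finset.prod_const]
    simp only [isUnit_iff_ne_zero]
    positivity
  rw [omN, ← matA_mulVec ρ T hρ hT N hN, ← hA, Matrix.mulVec_mulVec,
    Matrix.nonsing_inv_mul A hdet, Matrix.one_mulVec]

def FF (q : ℝ) (L : ℕ) : ℝ := (L:ℝ)*(1-q) + (2*q/(1+q))*(1-(-q)^L)

lemma sum_cOm_tail (q : ℝ) (hq0 : 0 < q) (hq1 : q < 1) (N m : ℕ) (hm : m ≤ N + 1) :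
    ∑ k : Fin (N+1), (if m ≤ k.val then cOm q N k else 0)
      = (2/(1+q)) * FF q (N+1-m) := by
  have hq1pos : (0:ℝ) < 1 + q := by linarith
  set c : ℝ := 2*(1-q)/(1+q) with hc
  set a : ℝ := 4*q/(1+q) with ha
  set L := N + 1 - m with hL
  set g : ℕ → ℝ := fun k => if m ≤ k then c + a*(-q)^(N-k) else 0 with hg
  have h1 : ∑ k : Fin (N+1), (if m ≤ k.val then cOm q N k else 0)
      = ∑ k ∈ Finset.range (N+1), g k := by
    rw [← Fin.sum_univ_eq_sum_range g (N+1)]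
    exact Finset.sum_congr rfl (fun k _ => by simp only [hg, cOm, hc, ha])
  rw [h1, Finset.range_eq_Ico,
    ← Finset.sum_Ico_consecutive g (Nat.zero_le m) hm]
  have h2 : ∑ k ∈ Finset.Ico 0 m, g k = 0 := by
    apply Finset.sum_eq_zero
    intro k hk
    rw [Finset.mem_Ico] at hk
    simp only [hg]
    rw [if_neg (by omega)]
  have h3 : ∑ k ∈ Finset.Ico m (N+1), g k
      = (L:ℝ)*c + a * ∑ r ∈ Finset.range L, (-q)^(L-1-r) := by
    rw [Finset.sum_Ico_eq_sum_range]
    have hgm : ∀ r ∈ Finset.range (N+1-m), g (m + r) = c + a*(-q)^(L-1-r) := by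
      intro r hr
      rw [Finset.mem_range] at hr
      simp only [hg]
      rw [if_pos (by omega)]
      have hh : N - (m + r) = L - 1 - r := by omega
      rw [hh]
    rw [Finset.sum_congr rfl hgm, Finset.sum_add_distrib, Finset.sum_const,
      Finset.card_range, Finset.mul_sum, nsmul_eq_mul]
  have h4 : ∑ r ∈ Finset.range L, (-q)^(L-1-r) = ((-q)^L - 1)/(-q - 1) := by
    rw [Finset.sum_range_reflect (fun s => (-q)^s) L,
      geom_sum_eq (show (-q) ≠ 1 by intro h; linarith) L]
  rw [h2, h3, h4, zero_add, FF, hc, ha]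
  have hne : -q - 1 ≠ 0 := by intro h; linarith
  have hne2 : 1 + q ≠ 0 := ne_of_gt hq1pos
  set P := (-q)^L
  field_simp
  ring


lemma FF_pos (q : ℝ) (hq0 : 0 < q) (hq1 : q < 1) (L : ℕ) (hL : 1 ≤ L) :
    0 < FF q L := by
  have h1 : |(-q)^L| < 1 := by
    rw [abs_pow, abs_neg, abs_of_pos hq0]
    exact pow_lt_one₀ hq0.le hq1 (by omega)
  have h2 : (-q)^L < 1 := lt_of_le_of_lt (le_abs_self _) h1
  have h3 : (0:ℝ) < L := by exact_mod_cast hL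
  have h4 : (0:ℝ) < 2*q/(1+q) := by positivity
  have h5 : (0:ℝ) < (L:ℝ)*(1-q) := by nlinarith
  rw [FF]
  nlinarith

lemma WN_formula (ρ T : ℝ) (hρ : 0 < ρ) (hT : 0 < T) (N : ℕ) (hN : 1 ≤ N) (t : ℝ)
    (hm : ⌈(N : ℝ) * t / T⌉₊ ≤ N) :
    WN N ρ T 0 t = FF (qq ρ T N) (N + 1 - ⌈(N : ℝ) * t / T⌉₊) / FF (qq ρ T N) (N+1) := by
  set q := qq ρ T N with hqdef
  have hq0 : 0 < q := qq_pos ρ T N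
  have hq1 : q < 1 := qq_lt_one ρ T hρ hT N hN
  have hq1pos : (0:ℝ) < 1 + q := by linarith
  set m := ⌈(N : ℝ) * t / T⌉₊ with hmdef
  have hS : ∑ k, omN N ρ T 0 k = (2/(1+q)) * FF q (N+1) := by
    have := sum_cOm_tail q hq0 hq1 N 0 (Nat.zero_le _)
    rw [omN_eq ρ T hρ hT N hN, ← hqdef]
    simpa using this
  have hFFpos : 0 < FF q (N+1) := FF_pos q hq0 hq1 (N+1) (by omega)
  have hFactor : (0:ℝ) < 2/(1+q) := by positivity
  have hSpos : 0 < ∑ k, omN N ρ T 0 k := by rw [hS]; positivity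
  have htail : ∑ k : Fin (N+1), (if m ≤ k.val then omN N ρ T 0 k else 0)
      = (2/(1+q)) * FF q (N+1-m) := by
    rw [omN_eq ρ T hρ hT N hN, ← hqdef]
    exact sum_cOm_tail q hq0 hq1 N m (by omega)
  have hsplit : ∑ k : Fin (N+1), (if k.val < m then omN N ρ T 0 k else 0)
      = (∑ k, omN N ρ T 0 k)
        - ∑ k : Fin (N+1), (if m ≤ k.val then omN N ρ T 0 k else 0) := by
    rw [eq_sub_iff_add_eq, ← Finset.sum_add_distrib]
    apply Finset.sum_congr rfl
    intro k _
    by_cases h : k.val < m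
    · rw [if_pos h, if_neg (by omega), add_zero]
    · rw [if_neg h, if_pos (by omega), zero_add]
  have hwsum : ∑ k : Fin (N+1), (if k.val < m then wN N ρ T 0 k else 0)
      = (1 / ∑ k, omN N ρ T 0 k)
        * ∑ k : Fin (N+1), (if k.val < m then omN N ρ T 0 k else 0) := by
    rw [Finset.mul_sum]
    apply Finset.sum_congr rfl
    intro k _
    by_cases h : k.val < m
    · rw [if_pos h, if_pos h, wN, Pi.smul_apply, smul_eq_mul]
    · rw [if_neg h, if_neg h, mul_zero]
  rw [WN, ← hmdef, hwsum, hsplit, hS, htail]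
  have hne : (2/(1+q)) * FF q (N+1) ≠ 0 := by positivity
  field_simp
  ring

lemma tendsto_n_one_sub_exp (a : ℝ) (ha : 0 < a) :
    Tendsto (fun n : ℕ => (n:ℝ) * (1 - Real.exp (-(a/n)))) atTop (nhds a) := by
  have hslope : Tendsto (fun t : ℝ => t⁻¹ * (Real.exp (0 + t) - Real.exp 0))
      (nhdsWithin 0 {(0:ℝ)}ᶜ) (nhds 1) := by
    have h := (Real.hasDerivAt_exp 0).tendsto_slope_zero
    simpa [Real.exp_zero, smul_eq_mul] using h
  have hcomp : Tendsto (fun n : ℕ => -(a/(n:ℝ))) atTop (nhdsWithin 0 {(0:ℝ)}ᶜ) := by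
    rw [tendsto_nhdsWithin_iff]
    constructor
    · have := tendsto_const_div_atTop_nhds_zero_nat a
      simpa using this.neg
    · filter_upwards [eventually_gt_atTop 0] with n hn
      have hn' : (0:ℝ) < (n:ℝ) := by exact_mod_cast hn
      have : 0 < a/(n:ℝ) := by positivity
      simp only [Set.mem_compl_iff, Set.mem_singleton_iff]
      intro hc
      rw [neg_eq_zero] at hc
      linarith
  have h2 : Tendsto (fun n : ℕ =>
      (-(a/(n:ℝ)))⁻¹ * (Real.exp (0 + -(a/(n:ℝ))) - Real.exp 0)) atTop (nhds 1) :=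
    hslope.comp hcomp
  have h3 := h2.const_mul a
  rw [mul_one] at h3
  refine h3.congr' ?_
  filter_upwards [eventually_gt_atTop 0] with n hn
  have hn' : (0:ℝ) < (n:ℝ) := by exact_mod_cast hn
  have hane : a ≠ 0 := ne_of_gt ha
  have hnne : (n:ℝ) ≠ 0 := ne_of_gt hn'
  rw [Real.exp_zero, zero_add]
  have key : a * (-(a / (n:ℝ)))⁻¹ = -(n:ℝ) := by rw [inv_neg, inv_div, mul_neg, mul_div_assoc'] ; rw [mul_comm a (n:ℝ), mul_div_assoc, div_self hane]; ring
  rw [← mul_assoc, key]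
  ring

lemma qq_tendsto (ρ T : ℝ) (u : ℕ → ℕ) (hu : Tendsto u atTop atTop) :
    Tendsto (fun j => qq ρ T (u j)) atTop (nhds 1) := by
  have h1 : Tendsto (fun n : ℕ => -(ρ*T/(n:ℝ))) atTop (nhds 0) := by
    have := tendsto_const_div_atTop_nhds_zero_nat (ρ*T)
    simpa using this.neg
  have h2 := (Real.continuous_exp.tendsto 0).comp (h1.comp hu)
  simpa [qq, Function.comp_def] using h2

lemma FF_tendsto_aux (ρ T : ℝ) (hρ : 0 < ρ) (hT : 0 < T) (u : ℕ → ℕ)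
    (hu : Tendsto u atTop atTop) (L : ℕ → ℕ) (γ : ℝ)
    (hγ : Tendsto (fun j => (L j : ℝ)/(u j : ℝ)) atTop (nhds γ))
    (ε : ℝ) (hε : ∀ j, (-1:ℝ)^(L j) = ε) :
    Tendsto (fun j => FF (qq ρ T (u j)) (L j)) atTop
      (nhds (ρ*T*γ + 1 - ε * Real.exp (-(ρ*T*γ)))) := by
  have hq : Tendsto (fun j => qq ρ T (u j)) atTop (nhds 1) := qq_tendsto ρ T u hu
  have hu1 : ∀ᶠ j in atTop, 1 ≤ u j := hu.eventually (eventually_ge_atTop 1)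
  have hA : Tendsto (fun j => (L j:ℝ)*(1 - qq ρ T (u j))) atTop (nhds (ρ*T*γ)) := by
    have hprod := hγ.mul ((tendsto_n_one_sub_exp (ρ*T) (by positivity)).comp hu)
    rw [mul_comm γ (ρ*T)] at hprod
    refine hprod.congr' ?_
    filter_upwards [hu1] with j hj
    have hne : ((u j : ℝ)) ≠ 0 := by
      have : (0:ℝ) < u j := by exact_mod_cast hj
      linarith
    simp only [Function.comp, qq]
    field_simp
  have hP : Tendsto (fun j => (qq ρ T (u j))^(L j)) atTop
      (nhds (Real.exp (-(ρ*T*γ)))) := by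
    have hexp2 : Tendsto (fun j => Real.exp (-(ρ*T) * ((L j:ℝ)/(u j:ℝ)))) atTop
        (nhds (Real.exp (-(ρ*T*γ)))) := by
      have harg : Tendsto (fun j => (-(ρ*T)) * ((L j:ℝ)/(u j:ℝ))) atTop
          (nhds ((-(ρ*T)) * γ)) := hγ.const_mul _
      have := (Real.continuous_exp.tendsto ((-(ρ*T)) * γ)).comp harg
      simp only [Function.comp_def] at this
      have heq : -(ρ*T)*γ = -(ρ*T*γ) := by ring
      rw [heq] at this
      exact this
    refine hexp2.congr ?_
    intro j
    rw [qq, ← Real.exp_nat_mul]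
    congr 1
    ring
  have hq2 : Tendsto (fun j => 2*(qq ρ T (u j))/(1 + qq ρ T (u j))) atTop (nhds 1) := by
    have h1 : Tendsto (fun j => 2*(qq ρ T (u j))) atTop (nhds 2) := by
      have := hq.const_mul 2
      simpa using this
    have h2 : Tendsto (fun j => 1 + qq ρ T (u j)) atTop (nhds 2) := by
      have h := (tendsto_const_nhds (α := ℕ) (x := (1:ℝ))).add hq
      have e : (1:ℝ) + 1 = 2 := by norm_num
      rw [e] at h
      exact h
    have := h1.div h2 (by norm_num)
    rw [show (2:ℝ)/2 = 1 by norm_num] at this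
    exact this
  have hmain := hA.add (hq2.mul ((tendsto_const_nhds (α := ℕ) (x := (1:ℝ))).sub
    (hP.const_mul ε)))
  have heq : ρ*T*γ + 1*(1 - ε * Real.exp (-(ρ*T*γ)))
      = ρ*T*γ + 1 - ε * Real.exp (-(ρ*T*γ)) := by ring
  rw [heq] at hmain
  refine hmain.congr ?_
  intro j
  simp only [FF]
  rw [neg_pow, hε j]

lemma WN_tendsto_general (ρ T : ℝ) (hρ : 0 < ρ) (hT : 0 < T) (t : ℝ) (ht0 : 0 < t)
    (htT : t ≤ T) (u : ℕ → ℕ) (hu : Tendsto u atTop atTop) (ε₁ ε₂ : ℝ)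
    (hε₁ : ∀ j, (-1:ℝ)^(u j + 1) = ε₁)
    (hε₂ : ∀ j, (-1:ℝ)^(u j + 1 - ⌈(u j : ℝ)*t/T⌉₊) = ε₂) :
    Tendsto (fun j => WN (u j) ρ T 0 t) atTop
      (nhds ((1 + ρ*(T-t) - ε₂*Real.exp (-(ρ*(T-t))))
        / (1 + ρ*T - ε₁*Real.exp (-(ρ*T))))) := by
  set m : ℕ → ℕ := fun j => ⌈(u j : ℝ)*t/T⌉₊ with hm
  have hu1 : ∀ᶠ j in atTop, 1 ≤ u j := hu.eventually (eventually_ge_atTop 1)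
  have hmle : ∀ j, m j ≤ u j := by
    intro j
    apply Nat.ceil_le.mpr
    rw [div_le_iff₀ hT]
    have h1 : (u j:ℝ) * t ≤ (u j:ℝ) * T :=
      mul_le_mul_of_nonneg_left htT (by positivity)
    linarith
  have h1u : Tendsto (fun j => 1/(u j:ℝ)) atTop (nhds 0) := by
    have := (tendsto_one_div_atTop_nhds_zero_nat :
      Tendsto (fun n : ℕ => 1/(n:ℝ)) atTop (nhds 0)).comp hu
    simpa [Function.comp_def] using this
  have hmdiv : Tendsto (fun j => (m j:ℝ)/(u j:ℝ)) atTop (nhds (t/T)) := by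
    have hh : Tendsto (fun j => t/T + 1/(u j:ℝ)) atTop (nhds (t/T)) := by
      have := (tendsto_const_nhds (α := ℕ) (x := t/T)).add h1u
      simpa using this
    refine tendsto_of_tendsto_of_tendsto_of_le_of_le'
      (tendsto_const_nhds (α := ℕ) (x := t/T)) hh ?_ ?_
    · filter_upwards [hu1] with j hj
      have hupos : (0:ℝ) < u j := by exact_mod_cast hj
      rw [le_div_iff₀ hupos]
      have := Nat.le_ceil ((u j:ℝ)*t/T)
      calc t/T*(u j:ℝ) = (u j:ℝ)*t/T := by ring
        _ ≤ (m j:ℝ) := this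
    · filter_upwards [hu1] with j hj
      have hupos : (0:ℝ) < u j := by exact_mod_cast hj
      have hlt : (m j:ℝ) < (u j:ℝ)*t/T + 1 :=
        Nat.ceil_lt_add_one (by positivity)
      rw [div_le_iff₀ hupos]
      have : (t/T + 1/(u j:ℝ)) * (u j:ℝ) = (u j:ℝ)*t/T + 1 := by
        field_simp
      rw [this]
      linarith
  have hLdiv : Tendsto (fun j => ((u j + 1 - m j : ℕ):ℝ)/(u j:ℝ)) atTop
      (nhds (1 - t/T)) := by
    have hbase := ((tendsto_const_nhds (α := ℕ) (x := (1:ℝ))).add h1u).sub hmdiv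
    have he : (1:ℝ) + 0 - t/T = 1 - t/T := by ring
    rw [he] at hbase
    refine hbase.congr' ?_
    filter_upwards [hu1] with j hj
    have hupos : (0:ℝ) < u j := by exact_mod_cast hj
    have hune : (u j:ℝ) ≠ 0 := ne_of_gt hupos
    have hcast : ((u j + 1 - m j : ℕ):ℝ) = (u j:ℝ) + 1 - (m j:ℝ) := by
      have := hmle j
      push_cast [Nat.cast_sub (by omega : m j ≤ u j + 1)]
      ring
    rw [hcast]
    field_simp
  have hγ1 : Tendsto (fun j => ((u j + 1 : ℕ):ℝ)/(u j:ℝ)) atTop (nhds 1) := by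
    have hbase := (tendsto_const_nhds (α := ℕ) (x := (1:ℝ))).add h1u
    have he : (1:ℝ) + 0 = 1 := by ring
    rw [he] at hbase
    refine hbase.congr' ?_
    filter_upwards [hu1] with j hj
    have hupos : (0:ℝ) < u j := by exact_mod_cast hj
    have hune : (u j:ℝ) ≠ 0 := ne_of_gt hupos
    push_cast
    field_simp
  have hnum := FF_tendsto_aux ρ T hρ hT u hu (fun j => u j + 1 - m j) (1 - t/T)
    hLdiv ε₂ hε₂
  have hden := FF_tendsto_aux ρ T hρ hT u hu (fun j => u j + 1) 1 hγ1 ε₁ hε₁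
  have hc1 : ρ*T*(1 - t/T) = ρ*(T-t) := by
    field_simp
  rw [hc1] at hnum
  rw [mul_one] at hden
  have hε₁pm : ε₁ = 1 ∨ ε₁ = -1 := by
    rcases Nat.even_or_odd (u 0 + 1) with h | h
    · left; rw [← hε₁ 0, h.neg_one_pow]
    · right; rw [← hε₁ 0, h.neg_one_pow]
  have hexplt : Real.exp (-(ρ*T)) < 1 := by
    rw [Real.exp_lt_one_iff]
    have : 0 < ρ*T := by positivity
    linarith
  have hexppos : 0 < Real.exp (-(ρ*T)) := Real.exp_pos _
  have hdenpos : 0 < ρ*T + 1 - ε₁*Real.exp (-(ρ*T)) := by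
    have hρT : 0 < ρ*T := by positivity
    rcases hε₁pm with h | h <;> rw [h] <;> nlinarith
  have hdiv := hnum.div hden (ne_of_gt hdenpos)
  have hval : (ρ*(T-t) + 1 - ε₂*Real.exp (-(ρ*(T-t))))/(ρ*T + 1 - ε₁*Real.exp (-(ρ*T)))
      = (1 + ρ*(T-t) - ε₂*Real.exp (-(ρ*(T-t))))/(1 + ρ*T - ε₁*Real.exp (-(ρ*T))) := by
    ring_nf
  rw [hval] at hdiv
  refine hdiv.congr' ?_
  filter_upwards [hu1] with j hj
  exact (WN_formula ρ T hρ hT (u j) hj t (hmle j)).symm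

lemma neg_one_pow_sub_real {n m : ℕ} (h : m ≤ n) :
    ((-1:ℝ))^(n - m) = (-1:ℝ)^n * (-1:ℝ)^m := by
  have h2 : (n - m) + m = n := by omega
  have hm : ((-1:ℝ))^m * ((-1:ℝ))^m = 1 := by
    rw [← pow_add]
    exact Even.neg_one_pow (Even.add_self m)
  calc ((-1:ℝ))^(n-m) = (-1:ℝ)^(n-m) * ((-1:ℝ)^m * (-1:ℝ)^m) := by rw [hm, mul_one]
    _ = ((-1:ℝ)^(n-m) * (-1:ℝ)^m) * (-1:ℝ)^m := by ring
    _ = (-1:ℝ)^n * (-1:ℝ)^m := by rw [← pow_add, h2]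

lemma ceil_le_self_nat (T t : ℝ) (hT : 0 < T) (htT : t ≤ T) (N : ℕ) :
    ⌈(N:ℝ)*t/T⌉₊ ≤ N := by
  apply Nat.ceil_le.mpr
  rw [div_le_iff₀ hT]
  have h1 : (N:ℝ) * t ≤ (N:ℝ) * T := mul_le_mul_of_nonneg_left htT (by positivity)
  linarith

lemma even_natCeil_iff (y : ℝ) (hy : 0 ≤ y) : Even (⌈y⌉₊) ↔ Even ⌈y⌉ := by
  rw [← Int.natCast_ceil_eq_ceil hy, Int.even_coe_nat]

lemma cluster_helper (ρ T : ℝ) (hρ : 0 < ρ) (hT : 0 < T) (t : ℝ) (ht0 : 0 < t)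
    (htT : t < T) (r : ℕ) (hr : r ≤ 1) (a : ℝ) :
    MapClusterPt a atTop (fun M : ℕ => WN (2*M + r) ρ T 0 t) ↔
      (a = (1 + ρ*(T-t) + Real.exp (-(ρ*(T-t))))
          /(1 + ρ*T - (-1:ℝ)^(r+1)*Real.exp (-(ρ*T))) ∨
       a = (1 + ρ*(T-t) - Real.exp (-(ρ*(T-t))))
          /(1 + ρ*T - (-1:ℝ)^(r+1)*Real.exp (-(ρ*T)))) := by
  have hx0 : 0 < t/T := by positivity
  have hx1 : t/T < 1 := (div_lt_one hT).mpr htT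
  set E : ℝ := (-1:ℝ)^(r+1) with hE
  -- the key subsequence convergence fact
  have key : ∀ (s : ℕ → ℕ), Tendsto s atTop atTop → ∀ σ : ℝ,
      (∀ j, ((-1:ℝ))^(⌈((2*s j + r : ℕ):ℝ)*t/T⌉₊) = σ) →
      Tendsto (fun j => WN (2*s j + r) ρ T 0 t) atTop
        (nhds ((1 + ρ*(T-t) - (E*σ)*Real.exp (-(ρ*(T-t))))
          /(1 + ρ*T - E*Real.exp (-(ρ*T))))) := by
    intro s hs σ hσ
    have hutop : Tendsto (fun j => 2*s j + r) atTop atTop :=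
      tendsto_atTop_mono (fun j => by omega) hs
    refine WN_tendsto_general ρ T hρ hT t ht0 htT.le _ hutop E (E*σ) ?_ ?_
    · intro j
      have he : 2*s j + r + 1 = 2*s j + (r+1) := by omega
      rw [he, pow_add, (even_two_mul (s j)).neg_one_pow, one_mul]
    · intro j
      have hmle : ⌈((2*s j + r : ℕ):ℝ)*t/T⌉₊ ≤ 2*s j + r :=
        ceil_le_self_nat T t hT htT.le _
      rw [neg_one_pow_sub_real (by omega), hσ j]
      have he : 2*s j + r + 1 = 2*s j + (r+1) := by omega
      rw [he, pow_add, (even_two_mul (s j)).neg_one_pow, one_mul]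
  -- frequently, both parities of the ceil occur
  have harg : ∀ M : ℕ, ((2*M + r : ℕ):ℝ)*t/T = 2*((r:ℝ)*(t/T)/2 + (M:ℝ)*(t/T)) := by
    intro M; push_cast; ring
  have hargpos : ∀ M : ℕ, (0:ℝ) ≤ ((2*M + r : ℕ):ℝ)*t/T := by
    intro M; positivity
  have hfe : ∃ᶠ M : ℕ in atTop, Even (⌈((2*M + r : ℕ):ℝ)*t/T⌉₊) := by
    refine (freq_even (t/T) ((r:ℝ)*(t/T)/2) hx0 hx1).mono ?_
    intro M hM
    rw [even_natCeil_iff _ (hargpos M), harg M]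
    exact hM
  have hfo : ∃ᶠ M : ℕ in atTop, ¬ Even (⌈((2*M + r : ℕ):ℝ)*t/T⌉₊) := by
    refine (freq_odd (t/T) ((r:ℝ)*(t/T)/2) hx0 hx1).mono ?_
    intro M hM
    rw [even_natCeil_iff _ (hargpos M), harg M]
    exact hM
  have hEpm : E = 1 ∨ E = -1 := by
    rcases Nat.even_or_odd (r+1) with h | h
    · left; rw [hE]; exact h.neg_one_pow
    · right; rw [hE]; exact h.neg_one_pow
  constructor
  · intro hcl
    obtain ⟨ψ, hψmono, hψtd⟩ := TopologicalSpace.FirstCountableTopology.tendsto_subseq hcl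
    rcases Classical.em (∃ᶠ j in atTop, Even (⌈((2*ψ j + r : ℕ):ℝ)*t/T⌉₊)) with hfr | hnfr
    · obtain ⟨χ, hχmono, hχP⟩ := extraction_of_frequently_atTop hfr
      have htd2 := key (fun j => ψ (χ j)) ((hψmono.comp hχmono).tendsto_atTop) 1
        (fun j => (hχP j).neg_one_pow)
      have halt : Tendsto (fun j => WN (2*ψ (χ j) + r) ρ T 0 t) atTop (nhds a) :=
        hψtd.comp hχmono.tendsto_atTop
      have hval := tendsto_nhds_unique halt htd2
      rcases hEpm with hEv | hEv
      · right; rw [hval, hEv]; ring_nf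
      · left; rw [hval, hEv]; ring_nf
    · have hev := (not_frequently.mp hnfr).frequently
      obtain ⟨χ, hχmono, hχP⟩ := extraction_of_frequently_atTop hev
      have htd2 := key (fun j => ψ (χ j)) ((hψmono.comp hχmono).tendsto_atTop) (-1)
        (fun j => (Nat.not_even_iff_odd.mp (hχP j)).neg_one_pow)
      have halt : Tendsto (fun j => WN (2*ψ (χ j) + r) ρ T 0 t) atTop (nhds a) :=
        hψtd.comp hχmono.tendsto_atTop
      have hval := tendsto_nhds_unique halt htd2
      rcases hEpm with hEv | hEv
      · left; rw [hval, hEv]; ring_nf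
      · right; rw [hval, hEv]; ring_nf
  · intro ha
    have build : ∀ σ : ℝ, (∃ᶠ M : ℕ in atTop, ((-1:ℝ))^(⌈((2*M + r : ℕ):ℝ)*t/T⌉₊) = σ) →
        MapClusterPt ((1 + ρ*(T-t) - (E*σ)*Real.exp (-(ρ*(T-t))))
          /(1 + ρ*T - E*Real.exp (-(ρ*T)))) atTop
          (fun M : ℕ => WN (2*M + r) ρ T 0 t) := by
      intro σ hfr
      obtain ⟨χ, hχmono, hχP⟩ := extraction_of_frequently_atTop hfr
      have htd := key χ hχmono.tendsto_atTop σ hχP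
      exact MapClusterPt.of_comp hχmono.tendsto_atTop htd.mapClusterPt
    have hfe' : ∃ᶠ M : ℕ in atTop, ((-1:ℝ))^(⌈((2*M + r : ℕ):ℝ)*t/T⌉₊) = 1 :=
      hfe.mono (fun M hM => hM.neg_one_pow)
    have hfo' : ∃ᶠ M : ℕ in atTop, ((-1:ℝ))^(⌈((2*M + r : ℕ):ℝ)*t/T⌉₊) = -1 :=
      hfo.mono (fun M hM => (Nat.not_even_iff_odd.mp hM).neg_one_pow)
    have hcp1 := build 1 hfe'
    have hcpm1 := build (-1) hfo'
    rcases hEpm with hEv | hEv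
    · rw [hEv] at hcp1 hcpm1
      rcases ha with h | h
      · rw [h, hEv]
        have heq : (1 + ρ*(T-t) + Real.exp (-(ρ*(T-t))))/(1 + ρ*T - 1*Real.exp (-(ρ*T)))
            = (1 + ρ*(T-t) - (1*(-1))*Real.exp (-(ρ*(T-t))))
              /(1 + ρ*T - 1*Real.exp (-(ρ*T))) := by ring_nf
        rw [heq]; exact hcpm1
      · rw [h, hEv]
        have heq : (1 + ρ*(T-t) - Real.exp (-(ρ*(T-t))))/(1 + ρ*T - 1*Real.exp (-(ρ*T)))
            = (1 + ρ*(T-t) - (1*1)*Real.exp (-(ρ*(T-t))))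
              /(1 + ρ*T - 1*Real.exp (-(ρ*T))) := by ring_nf
        rw [heq]; exact hcp1
    · rw [hEv] at hcp1 hcpm1
      rcases ha with h | h
      · rw [h, hEv]
        have heq : (1 + ρ*(T-t) + Real.exp (-(ρ*(T-t))))/(1 + ρ*T - (-1)*Real.exp (-(ρ*T)))
            = (1 + ρ*(T-t) - ((-1)*1)*Real.exp (-(ρ*(T-t))))
              /(1 + ρ*T - (-1)*Real.exp (-(ρ*T))) := by ring_nf
        rw [heq]; exact hcp1
      · rw [h, hEv]
        have heq : (1 + ρ*(T-t) - Real.exp (-(ρ*(T-t))))/(1 + ρ*T - (-1)*Real.exp (-(ρ*T)))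
            = (1 + ρ*(T-t) - ((-1)*(-1))*Real.exp (-(ρ*(T-t))))
              /(1 + ρ*T - (-1)*Real.exp (-(ρ*T))) := by ring_nf
        rw [heq]; exact hcpm1

/-- Oscillation of the inventories `W^{(N)}_t` when `θ = 0`: `W^{(N)}_0 = 1`; for
`t ∈ (0,T)` the even subsequence has exactly the cluster points `φ₊(t), φ₋(t)` and the odd
subsequence exactly the cluster points `ψ₊(t), ψ₋(t)`; and at `t = T` the even/odd
subsequences converge to `φ₊(T)`/`ψ₊(T)`. -/
theorem stmt16 (n : ℕ) (hn : 2 ≤ n) (ρ T : ℝ) (hρ : 0 < ρ) (hT : 0 < T)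
    (φp φm ψp ψm : ℝ → ℝ)
    (hφp : ∀ t, φp t = (1 + ρ * (T - t) + Real.exp (-(ρ * (T - t))))
      / (1 + ρ * T + Real.exp (-(ρ * T))))
    (hφm : ∀ t, φm t = (1 + ρ * (T - t) - Real.exp (-(ρ * (T - t))))
      / (1 + ρ * T + Real.exp (-(ρ * T))))
    (hψp : ∀ t, ψp t = (1 + ρ * (T - t) + Real.exp (-(ρ * (T - t))))
      / (1 + ρ * T - Real.exp (-(ρ * T))))
    (hψm : ∀ t, ψm t = (1 + ρ * (T - t) - Real.exp (-(ρ * (T - t))))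
      / (1 + ρ * T - Real.exp (-(ρ * T)))) :
    (∀ N : ℕ, WN N ρ T 0 0 = 1) ∧
    (∀ t : ℝ, 0 < t → t < T →
      (∀ a : ℝ, MapClusterPt a atTop (fun N : ℕ => WN (2 * N) ρ T 0 t) ↔
        a = φp t ∨ a = φm t) ∧
      (∀ a : ℝ, MapClusterPt a atTop (fun N : ℕ => WN (2 * N + 1) ρ T 0 t) ↔
        a = ψp t ∨ a = ψm t)) ∧
    Tendsto (fun N : ℕ => WN (2 * N) ρ T 0 T) atTop (nhds (φp T)) ∧
    Tendsto (fun N : ℕ => WN (2 * N + 1) ρ T 0 T) atTop (nhds (ψp T)) := by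
  have hceil : ∀ m : ℕ, ⌈(m:ℝ)*T/T⌉₊ = m := by
    intro m
    rw [mul_div_assoc, div_self (ne_of_gt hT), mul_one, Nat.ceil_natCast]
  refine ⟨?_, ?_, ?_, ?_⟩
  · intro N
    simp [WN]
  · intro t ht0 htT
    constructor
    · intro a
      have h := cluster_helper ρ T hρ hT t ht0 htT 0 (by omega) a
      have hfun : (fun M : ℕ => WN (2*M + 0) ρ T 0 t) = (fun N : ℕ => WN (2*N) ρ T 0 t) := by
        funext M; norm_num
      rw [hfun] at h
      have e1 : (1 + ρ*(T-t) + Real.exp (-(ρ*(T-t))))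
          /(1 + ρ*T - (-1:ℝ)^(0+1)*Real.exp (-(ρ*T))) = φp t := by
        rw [hφp t]; norm_num
      have e2 : (1 + ρ*(T-t) - Real.exp (-(ρ*(T-t))))
          /(1 + ρ*T - (-1:ℝ)^(0+1)*Real.exp (-(ρ*T))) = φm t := by
        rw [hφm t]; norm_num
      rw [e1, e2] at h
      exact h
    · intro a
      have h := cluster_helper ρ T hρ hT t ht0 htT 1 (by omega) a
      have hfun : (fun M : ℕ => WN (2*M + 1) ρ T 0 t) = (fun N : ℕ => WN (2*N + 1) ρ T 0 t) := rfl
      rw [hfun] at h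
      have e1 : (1 + ρ*(T-t) + Real.exp (-(ρ*(T-t))))
          /(1 + ρ*T - (-1:ℝ)^(1+1)*Real.exp (-(ρ*T))) = ψp t := by
        rw [hψp t]; norm_num
      have e2 : (1 + ρ*(T-t) - Real.exp (-(ρ*(T-t))))
          /(1 + ρ*T - (-1:ℝ)^(1+1)*Real.exp (-(ρ*T))) = ψm t := by
        rw [hψm t]; norm_num
      rw [e1, e2] at h
      exact h
  · have htd := WN_tendsto_general ρ T hρ hT T hT le_rfl (fun j => 2*j)
      (tendsto_atTop_mono (fun j => by simp only [id_eq]; omega) tendsto_id) (-1) (-1)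
      (fun j => Odd.neg_one_pow ⟨j, rfl⟩)
      (fun j => by
        rw [hceil (2*j)]
        have he : 2*j + 1 - 2*j = 1 := by omega
        rw [he, pow_one])
    have heq : (1 + ρ*(T-T) - (-1:ℝ)*Real.exp (-(ρ*(T-T))))
        /(1 + ρ*T - (-1:ℝ)*Real.exp (-(ρ*T))) = φp T := by
      rw [hφp T]; ring_nf
    rw [heq] at htd
    exact htd
  · have htd := WN_tendsto_general ρ T hρ hT T hT le_rfl (fun j => 2*j + 1)
      (tendsto_atTop_mono (fun j => by simp only [id_eq]; omega) tendsto_id) 1 (-1)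
      (fun j => Even.neg_one_pow ⟨j+1, by show 2*j+1+1 = (j+1)+(j+1); omega⟩)
      (fun j => by
        rw [hceil (2*j+1)]
        have he : 2*j + 1 + 1 - (2*j+1) = 1 := by omega
        rw [he, pow_one])
    have heq : (1 + ρ*(T-T) - (-1:ℝ)*Real.exp (-(ρ*(T-T))))
        /(1 + ρ*T - (1:ℝ)*Real.exp (-(ρ*T))) = ψp T := by
      rw [hψp T]; ring_nf
    rw [heq] at htd
    exact htd
end
end

section
/- Let n ≥ 2 be an integer, ρ > 0, T > 0, N ≥ 2, and take θ := (n−1)/4, so that κ := 2θ + (n−1)/2 = n − 1; set α := e^{−ρT/N} and use the equidistant grid t_k = kT/N. Then the vector ν := (Γ^θ + (n−1)Γ̃)^{−1}1 satisfies, for every m ∈ {1,…,N+1}: Σ_{i=1}^{m} ν_i = (1/(n+α))·( (1−α)m + α + (α(α²−n)/(n(n+α)))·(α(n−1)/(n−α²))^{N+1} + (α(1+α)/(n+α))·(α(n−1)/(n−α²))^{N+1−m} ). -/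
open Matrix Finset Filter

noncomputable section

/-! ### Auxiliary development -/

/-- Entries of the matrix `Γ^θ + (n−1)Γ̃` on the equidistant grid, after simplification. -/
def Ment (n' a : ℝ) (i j : ℕ) : ℝ := if j ≤ i then n' * a ^ (i - j) else a ^ (j - i)

/-- Lower triangular factor. -/
def Lent (a : ℝ) (i k : ℕ) : ℝ := if k ≤ i then a ^ (i - k) else 0

/-- Upper triangular factor. -/
def Uent (n' a : ℝ) (k j : ℕ) : ℝ :=
  if k ≤ j then
    (if k = 0 then (if j = 0 then n' else a ^ j)
     else if k = j then n' - a ^ 2 else (1 - a ^ 2) * a ^ (j - k))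
  else 0

/-- Explicit candidate for `ν`. -/
def nuf (n' a q : ℝ) (N k : ℕ) : ℝ :=
  (1 / (n' + a)) * ((1 - a) + (a - q) * q ^ (N - k)
    + (if k = 0 then a + a ^ 2 / n' * q ^ (N + 1) else 0))

def MmatX (n' a : ℝ) (N : ℕ) : Matrix (Fin (N + 1)) (Fin (N + 1)) ℝ :=
  Matrix.of fun i j => Ment n' a i.val j.val
def LmatX (a : ℝ) (N : ℕ) : Matrix (Fin (N + 1)) (Fin (N + 1)) ℝ :=
  Matrix.of fun i j => Lent a i.val j.val
def UmatX (n' a : ℝ) (N : ℕ) : Matrix (Fin (N + 1)) (Fin (N + 1)) ℝ :=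
  Matrix.of fun i j => Uent n' a i.val j.val

theorem row_sum (n' a q : ℝ) (hn : (2:ℝ) ≤ n') (ha0 : 0 < a) (ha1 : a < 1)
    (hq : q * (n' - a ^ 2) = a * (n' - 1)) (hq0 : 0 < q) (hq1 : q < 1)
    (haq : q < a) (N i : ℕ) (hi : i ≤ N) :
    ∑ j ∈ range (N + 1), Ment n' a i j * nuf n' a q N j = 1 := by
  have hn0 : n' ≠ 0 := by nlinarith
  have hP : n' + a ≠ 0 := by nlinarith
  have ha1' : a - 1 ≠ 0 := by nlinarith
  have haq1 : a * q - 1 ≠ 0 := by nlinarith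
  have haq' : a - q ≠ 0 := by nlinarith
  set E : ℝ := a + a ^ 2 / n' * q ^ (N + 1) with hE
  set P : ℝ := 1 / (n' + a) with hPdef
  set K : ℕ := N - i with hK
  -- split the sum
  rw [← Finset.sum_range_add_sum_Ico _ (by omega : i + 1 ≤ N + 1)]
  have hS1 : ∑ j ∈ range (i + 1), Ment n' a i j * nuf n' a q N j
      = P * n' * (1 - a) * (∑ d ∈ range (i + 1), a ^ d)
        + P * n' * (a - q) * q ^ K * (∑ d ∈ range (i + 1), (a * q) ^ d)
        + P * n' * a ^ i * E := by
    rw [← Finset.sum_range_reflect]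
    have : ∀ d ∈ range (i + 1),
        Ment n' a i (i + 1 - 1 - d) * nuf n' a q N (i + 1 - 1 - d)
          = P * n' * (1 - a) * a ^ d + P * n' * (a - q) * q ^ K * (a * q) ^ d
            + (if d = i then P * n' * a ^ i * E else 0) := by
      intro d hd
      rw [mem_range] at hd
      have hdi : d ≤ i := by omega
      have e0 : i + 1 - 1 - d = i - d := by omega
      have e1 : i - d ≤ i := by omega
      have e2 : i - (i - d) = d := by omega
      have e3 : N - (i - d) = K + d := by omega
      rw [e0, Ment, if_pos e1, e2, nuf, e3, pow_add, mul_pow]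
      rcases eq_or_ne d i with h | h
      · rw [if_pos (by omega : i - d = 0), if_pos h, h]
        ring
      · rw [if_neg (by omega : ¬ i - d = 0), if_neg h]
        ring
    rw [Finset.sum_congr rfl this, Finset.sum_add_distrib, Finset.sum_add_distrib,
      Finset.sum_ite_eq' (range (i + 1)) i, if_pos (by simp), ← Finset.mul_sum, ← Finset.mul_sum]
  have hS2 : ∑ j ∈ Ico (i + 1) (N + 1), Ment n' a i j * nuf n' a q N j
      = P * a * (1 - a) * (∑ e ∈ range K, a ^ e)
        + P * a * (a - q) * (∑ e ∈ range K, a ^ e * q ^ (K - 1 - e)) := by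
    rw [Finset.sum_Ico_eq_sum_range]
    have hNK : N + 1 - (i + 1) = K := by omega
    rw [hNK]
    have : ∀ e ∈ range K,
        Ment n' a i (i + 1 + e) * nuf n' a q N (i + 1 + e)
          = P * a * (1 - a) * a ^ e + P * a * (a - q) * (a ^ e * q ^ (K - 1 - e)) := by
      intro e he
      rw [mem_range] at he
      have e1 : ¬ (i + 1 + e ≤ i) := by omega
      have e2 : i + 1 + e - i = e + 1 := by omega
      have e3 : N - (i + 1 + e) = K - 1 - e := by omega
      rw [Ment, if_neg e1, e2, nuf, e3, if_neg (by omega : ¬ i + 1 + e = 0), pow_succ]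
      ring
    rw [Finset.sum_congr rfl this, Finset.sum_add_distrib, ← Finset.mul_sum, ← Finset.mul_sum]
  rw [hS1, hS2]
  -- abbreviations
  set G1 : ℝ := ∑ d ∈ range (i + 1), a ^ d with hG1d
  set G2 : ℝ := ∑ d ∈ range (i + 1), (a * q) ^ d with hG2d
  set G3 : ℝ := ∑ e ∈ range K, a ^ e with hG3d
  set G4 : ℝ := ∑ e ∈ range K, a ^ e * q ^ (K - 1 - e) with hG4d
  have h1 : G1 * (a - 1) = a * a ^ i - 1 := by
    rw [hG1d, geom_sum_mul, pow_succ]; ring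
  have h2 : G2 * (a * q - 1) = a * q * (a ^ i * q ^ i) - 1 := by
    rw [hG2d, geom_sum_mul, pow_succ, mul_pow]; ring
  have h3 : G3 * (a - 1) = a ^ K - 1 := by rw [hG3d, geom_sum_mul]
  have h4 : G4 * (a - q) = a ^ K - q ^ K := by rw [hG4d, geom_sum₂_mul]
  have hqN : q ^ (N + 1) = q * (q ^ K * q ^ i) := by
    rw [← pow_add, ← pow_succ']
    congr 1; omega
  have f3 : n' * (a - q) = a * (1 - a * q) := by linear_combination -hq
  set X : ℝ := a ^ i
  set Y : ℝ := q ^ i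
  set W : ℝ := a ^ K
  set V : ℝ := q ^ K
  have e1 : n' * (1 - a) * G1 = n' - n' * a * X := by linear_combination (-n') * h1
  have e2 : n' * (a - q) * (V * G2) = a * V - a ^ 2 * q * V * X * Y := by
    linear_combination (-(a * V)) * h2 + (V * G2) * f3
  have e3 : a * (1 - a) * G3 = a - a * W := by linear_combination (-a) * h3
  have e4 : a * (a - q) * G4 = a * W - a * V := by linear_combination a * h4
  have hT : P * n' * (1 - a) * G1 + P * n' * (a - q) * V * G2 + P * n' * X * E
      + (P * a * (1 - a) * G3 + P * a * (a - q) * G4)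
      = P * ((n' * (1 - a) * G1) + (n' * (a - q) * (V * G2)) + (n' * X * E)
        + (a * (1 - a) * G3) + (a * (a - q) * G4)) := by ring
  rw [hT]
  have hEE : n' * X * E = n' * a * X + a ^ 2 * q * V * X * Y := by
    rw [hE, hqN]; field_simp
  have hBIG : (n' * (1 - a) * G1) + (n' * (a - q) * (V * G2)) + (n' * X * E)
      + (a * (1 - a) * G3) + (a * (a - q) * G4) = n' + a := by
    linear_combination e1 + e2 + e3 + e4 + hEE
  rw [hBIG, hPdef]
  field_simp


theorem LU_sum (n' a : ℝ) (N i j : ℕ) (hi : i ≤ N) (hj : j ≤ N) :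
    ∑ k ∈ range (N + 1), Lent a i k * Uent n' a k j = Ment n' a i j := by
  have geo : ∀ m : ℕ, (1 - a ^ 2) * ∑ d ∈ range m, (a ^ 2) ^ d = 1 - (a ^ 2) ^ m := by
    intro m
    have := geom_sum_mul (a ^ 2) m
    linear_combination -this
  rcases Nat.eq_zero_or_pos j with hj0 | hj1
  · subst hj0
    rw [Finset.sum_eq_single_of_mem 0 (by simp)]
    · rw [Lent, Uent, if_pos (Nat.zero_le i), if_pos le_rfl, if_pos rfl, if_pos rfl,
        Ment, if_pos (Nat.zero_le i)]
      ring
    · intro k _ hk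
      rw [Uent, if_neg (by omega), mul_zero]
  · obtain ⟨jp, rfl⟩ : ∃ jp, j = jp + 1 := ⟨j - 1, by omega⟩
    rcases le_or_gt (jp + 1) i with hji | hij
    · -- case 1 ≤ j ≤ i
      rw [← Finset.sum_range_add_sum_Ico _ (by omega : jp + 1 + 1 ≤ N + 1)]
      have h2 : ∑ k ∈ Ico (jp + 1 + 1) (N + 1), Lent a i k * Uent n' a k (jp + 1) = 0 := by
        apply Finset.sum_eq_zero
        intro k hk
        rw [mem_Ico] at hk
        rw [Uent, if_neg (by omega), mul_zero]
      rw [h2, add_zero, Finset.sum_range_succ, Finset.sum_range_succ']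
      have hf0 : Lent a i 0 * Uent n' a 0 (jp + 1)
          = a ^ (i - (jp + 1)) * (a ^ 2) ^ (jp + 1) := by
        rw [Lent, Uent, if_pos (Nat.zero_le i), if_pos (Nat.zero_le (jp + 1)), if_pos rfl,
          if_neg (by omega), Nat.sub_zero, ← pow_mul, ← pow_add, ← pow_add]
        congr 1
        omega
      have hfj : Lent a i (jp + 1) * Uent n' a (jp + 1) (jp + 1)
          = a ^ (i - (jp + 1)) * (n' - a ^ 2) := by
        rw [Lent, Uent, if_pos hji, if_pos le_rfl, if_neg (by omega), if_pos rfl]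
      have hmid : ∑ k ∈ range jp, Lent a i (k + 1) * Uent n' a (k + 1) (jp + 1)
          = a ^ (i - (jp + 1)) * a ^ 2 * (1 - a ^ 2) * ∑ d ∈ range jp, (a ^ 2) ^ d := by
        rw [← Finset.sum_range_reflect, Finset.mul_sum]
        apply Finset.sum_congr rfl
        intro k hk
        rw [mem_range] at hk
        have e1 : jp - 1 - k + 1 = jp - k := by omega
        have e2 : jp - k ≤ i := by omega
        rw [e1, Lent, Uent, if_pos e2, if_pos (by omega), if_neg (by omega),
          if_neg (by omega),
          show i - (jp - k) = (i - (jp + 1)) + (1 + k) from by omega,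
          show jp + 1 - (jp - k) = 1 + k from by omega]
        ring
      rw [hf0, hfj, hmid, Ment, if_pos hji]
      linear_combination (a ^ (i - (jp + 1)) * a ^ 2) * (geo jp)
    · -- case i < j
      rw [← Finset.sum_range_add_sum_Ico _ (by omega : i + 1 ≤ N + 1)]
      have h2 : ∑ k ∈ Ico (i + 1) (N + 1), Lent a i k * Uent n' a k (jp + 1) = 0 := by
        apply Finset.sum_eq_zero
        intro k hk
        rw [mem_Ico] at hk
        rw [Lent, if_neg (by omega), zero_mul]
      rw [h2, add_zero, Finset.sum_range_succ']
      have hf0 : Lent a i 0 * Uent n' a 0 (jp + 1)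
          = a ^ (jp + 1 - i) * (a ^ 2) ^ i := by
        rw [Lent, Uent, if_pos (Nat.zero_le i), if_pos (Nat.zero_le (jp + 1)), if_pos rfl,
          if_neg (by omega), Nat.sub_zero, ← pow_mul, ← pow_add, ← pow_add]
        congr 1
        omega
      have hmid : ∑ k ∈ range i, Lent a i (k + 1) * Uent n' a (k + 1) (jp + 1)
          = a ^ (jp + 1 - i) * (1 - a ^ 2) * ∑ d ∈ range i, (a ^ 2) ^ d := by
        rw [← Finset.sum_range_reflect, Finset.mul_sum]
        apply Finset.sum_congr rfl
        intro k hk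
        rw [mem_range] at hk
        have e1 : i - 1 - k + 1 = i - k := by omega
        have e2 : i - k ≤ i := by omega
        rw [e1, Lent, Uent, if_pos e2, if_pos (show i - k ≤ jp + 1 from by omega),
          if_neg (show ¬ i - k = 0 from by omega),
          if_neg (show ¬ i - k = jp + 1 from by omega),
          show i - (i - k) = k from by omega,
          show jp + 1 - (i - k) = (jp + 1 - i) + k from by omega]
        ring
      rw [hf0, hmid, Ment, if_neg (by omega)]
      linear_combination (a ^ (jp + 1 - i)) * (geo i)


theorem MmatX_det (n' a : ℝ) (hn : (2:ℝ) ≤ n') (ha0 : 0 < a) (ha1 : a < 1) (N : ℕ) :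
    IsUnit (MmatX n' a N).det := by
  have hLU : MmatX n' a N = LmatX a N * UmatX n' a N := by
    ext i j
    rw [Matrix.mul_apply]
    rw [show ∑ k : Fin (N + 1), LmatX a N i k * UmatX n' a N k j
        = ∑ k ∈ range (N + 1), Lent a i.val k * Uent n' a k j.val from
      Fin.sum_univ_eq_sum_range (fun k => Lent a i.val k * Uent n' a k j.val) (N + 1)]
    exact (LU_sum n' a N i.val j.val (by omega) (by omega)).symm
  have hdetL : (LmatX a N).det = 1 := by
    rw [Matrix.det_of_lowerTriangular (LmatX a N)
      (by intro i j hij; exact if_neg (Nat.not_le.2 hij))]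
    · simp [LmatX, Lent]
  have hdetU : (UmatX n' a N).det = n' * (n' - a ^ 2) ^ N := by
    rw [Matrix.det_of_upperTriangular
      (by intro i j hij; exact if_neg (by simpa using Nat.not_le.2 hij))]
    rw [Fin.prod_univ_succ]
    have h0 : UmatX n' a N 0 0 = n' := by simp [UmatX, Uent]
    have hs : ∀ i : Fin N, UmatX n' a N i.succ i.succ = n' - a ^ 2 := by
      intro i
      simp [UmatX, Uent, Fin.val_succ]
    rw [h0, Finset.prod_congr rfl (fun i _ => hs i), Finset.prod_const]
    simp
  rw [hLU, Matrix.det_mul, hdetL, hdetU, one_mul]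
  have h1 : (0:ℝ) < n' - a ^ 2 := by nlinarith
  exact isUnit_iff_ne_zero.2 (by positivity)

theorem Minv_one (n' a q : ℝ) (hn : (2:ℝ) ≤ n') (ha0 : 0 < a) (ha1 : a < 1)
    (hq : q * (n' - a ^ 2) = a * (n' - 1)) (hq0 : 0 < q) (hq1 : q < 1)
    (haq : q < a) (N : ℕ) :
    (MmatX n' a N)⁻¹.mulVec 1 = fun k : Fin (N + 1) => nuf n' a q N k.val := by
  have hMnu : (MmatX n' a N).mulVec (fun k : Fin (N + 1) => nuf n' a q N k.val) = 1 := by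
    funext i
    show ∑ j : Fin (N + 1), MmatX n' a N i j * nuf n' a q N j.val = 1
    rw [show ∑ j : Fin (N + 1), MmatX n' a N i j * nuf n' a q N j.val
        = ∑ j ∈ range (N + 1), Ment n' a i.val j * nuf n' a q N j from
      Fin.sum_univ_eq_sum_range (fun j => Ment n' a i.val j * nuf n' a q N j) (N + 1)]
    exact row_sum n' a q hn ha0 ha1 hq hq0 hq1 haq N i.val (by omega)
  conv_lhs => rw [← hMnu]
  rw [Matrix.mulVec_mulVec, Matrix.nonsing_inv_mul _ (MmatX_det n' a hn ha0 ha1 N),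
    Matrix.one_mulVec]


theorem sumf (n' a q : ℝ) (hn : (2:ℝ) ≤ n') (ha0 : 0 < a) (ha1 : a < 1)
    (hq : q * (n' - a ^ 2) = a * (n' - 1)) (hq0 : 0 < q) (hq1 : q < 1)
    (N m : ℕ) (hm1 : 1 ≤ m) (hm2 : m ≤ N + 1) :
    ∑ k ∈ range m, nuf n' a q N k
      = (1 / (n' + a)) * ((1 - a) * m + a
          + (a * (a ^ 2 - n') / (n' * (n' + a))) * (q ^ (N + 1 - m) * q ^ m)
          + (a * (1 + a) / (n' + a)) * q ^ (N + 1 - m)) := by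
  have hn0 : n' ≠ 0 := by nlinarith
  have hP : n' + a ≠ 0 := by nlinarith
  have hq1' : q - 1 ≠ 0 := by nlinarith
  set P : ℝ := 1 / (n' + a) with hPdef
  set E0 : ℝ := a + a ^ 2 / n' * q ^ (N + 1) with hE0
  have hsplit : ∑ k ∈ range m, nuf n' a q N k
      = P * (1 - a) * m + P * (a - q) * (q ^ (N + 1 - m) * ∑ d ∈ range m, q ^ d)
        + P * E0 := by
    have step : ∀ k ∈ range m,
        nuf n' a q N k = P * (1 - a) + P * (a - q) * q ^ (N - k)
          + (if k = 0 then P * E0 else 0) := by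
      intro k _
      rw [nuf]
      split_ifs <;> ring
    rw [Finset.sum_congr rfl step, Finset.sum_add_distrib, Finset.sum_add_distrib,
      Finset.sum_const, card_range, Finset.sum_ite_eq' (range m) 0, if_pos
        (by rw [mem_range]; omega)]
    have hrefl : ∑ k ∈ range m, P * (a - q) * q ^ (N - k)
        = P * (a - q) * (q ^ (N + 1 - m) * ∑ d ∈ range m, q ^ d) := by
      rw [← Finset.sum_range_reflect, Finset.mul_sum, Finset.mul_sum]
      apply Finset.sum_congr rfl
      intro d hd
      rw [mem_range] at hd
      rw [← pow_add, show N + 1 - m + d = N - (m - 1 - d) from by omega]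
    rw [hrefl]
    push_cast
    ring
  rw [hsplit]
  set Gm : ℝ := ∑ d ∈ range m, q ^ d with hGmd
  have hGm : Gm * (q - 1) = q ^ m - 1 := geom_sum_mul q m
  set Z : ℝ := q ^ (N + 1 - m)
  set Qm : ℝ := q ^ m
  have hqN1 : q ^ (N + 1) = Z * Qm := by rw [← pow_add]; congr 1; omega
  have key2 : (q - 1) * (n' * (n' + a) * (a - q) * Z * Gm + a ^ 2 * (n' + a) * Z * Qm
      - a * (a ^ 2 - n') * Z * Qm - a * n' * (1 + a) * Z) = 0 := by
    linear_combination (n' * (n' + a) * (a - q) * Z) * hGm - n' * (Qm - 1) * Z * hq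
  have key : n' * (n' + a) * (a - q) * Z * Gm + a ^ 2 * (n' + a) * Z * Qm
      - a * (a ^ 2 - n') * Z * Qm - a * n' * (1 + a) * Z = 0 :=
    by rcases mul_eq_zero.1 key2 with h | h
       · exact absurd h hq1'
       · exact h
  have expand : P * (1 - a) * m + P * (a - q) * (Z * Gm) + P * E0
      = P * ((1 - a) * m + (a - q) * (Z * Gm) + E0) := by ring
  rw [expand]
  suffices h : (1 - a) * (m:ℝ) + (a - q) * (Z * Gm) + E0
      = (1 - a) * m + a + a * (a ^ 2 - n') / (n' * (n' + a)) * (Z * Qm)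
        + a * (1 + a) / (n' + a) * Z by rw [h]
  rw [hE0, hqN1]
  field_simp
  linear_combination key

/-- Partial sums of the components of `ν` in the special case `θ = (n−1)/4`
(i.e. `κ = n−1`): for `m ∈ {1,…,N+1}`,
`Σ_{i=1}^m ν_i = (1/(n+α)) ((1−α)m + α + (α(α²−n)/(n(n+α))) q^{N+1} + (α(1+α)/(n+α)) q^{N+1−m})`
with `q = α(n−1)/(n−α²)` (paper index `i` is Lean index `i.val + 1`). -/
theorem stmt18 (n : ℕ) (hn : 2 ≤ n) (ρ T : ℝ) (hρ : 0 < ρ) (hT : 0 < T)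
    (N : ℕ) (hN : 2 ≤ N) (α : ℝ) (hα : α = Real.exp (-(ρ * T / N))) :
    ∀ m : ℕ, 1 ≤ m → m ≤ N + 1 →
      (∑ k : Fin (N + 1),
          (if k.val < m then nuN n N ρ T (((n : ℝ) - 1) / 4) k else 0))
        = (1 / ((n : ℝ) + α)) *
            ((1 - α) * (m : ℝ) + α
              + (α * (α ^ 2 - (n : ℝ)) / ((n : ℝ) * ((n : ℝ) + α))) *
                  (α * ((n : ℝ) - 1) / ((n : ℝ) - α ^ 2)) ^ (N + 1)
              + (α * (1 + α) / ((n : ℝ) + α)) *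
                  (α * ((n : ℝ) - 1) / ((n : ℝ) - α ^ 2)) ^ (N + 1 - m)) := by
  intro m hm1 hm2
  have hn' : (2:ℝ) ≤ (n:ℝ) := by exact_mod_cast hn
  have hNR : (0:ℝ) < (N:ℝ) := by
    have : (0:ℕ) < N := by omega
    exact_mod_cast this
  have ha0 : 0 < α := by rw [hα]; exact Real.exp_pos _
  have ha1 : α < 1 := by
    rw [hα, Real.exp_lt_one_iff]
    have : 0 < ρ * T / N := by positivity
    linarith
  have hna : (0:ℝ) < (n:ℝ) - α ^ 2 := by nlinarith
  set q : ℝ := α * ((n:ℝ) - 1) / ((n:ℝ) - α ^ 2) with hqdef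
  have hq : q * ((n:ℝ) - α ^ 2) = α * ((n:ℝ) - 1) := by
    rw [hqdef]; field_simp
  have hq0 : 0 < q := by
    apply div_pos _ hna; nlinarith
  have hq1 : q < 1 := by
    rw [hqdef, div_lt_one hna]; nlinarith
  have haq : q < α := by
    rw [hqdef, div_lt_iff₀ hna]; nlinarith
  have hMmat : Gam ρ (((n:ℝ) - 1) / 4) (egrid T N) + ((n:ℝ) - 1) • GamT ρ (egrid T N)
      = MmatX (n:ℝ) α N := by
    have hexp : ∀ d : ℕ, Real.exp (-(ρ * ((d:ℝ) * T / N))) = α ^ d := by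
      intro d
      rw [hα, ← Real.exp_nat_mul]
      congr 1
      ring
    have hgrid : ∀ i j : Fin (N + 1), j.val ≤ i.val →
        egrid T N i - egrid T N j = ((i.val - j.val : ℕ):ℝ) * T / N := by
      intro i j hji
      unfold egrid
      rw [Nat.cast_sub hji]
      ring
    ext i j
    simp only [Matrix.add_apply, Matrix.smul_apply, smul_eq_mul, Gam, GamT, MmatX,
      Matrix.of_apply, Ment]
    rcases lt_trichotomy i j with hij | hij | hij
    · have hvv : i.val < j.val := hij
      rw [if_pos hij, if_neg (ne_of_lt hij), if_neg (by omega : ¬ j.val ≤ i.val),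
        abs_sub_comm, hgrid j i hvv.le, abs_of_nonneg (by positivity), hexp]
      ring
    · subst hij
      rw [if_neg (lt_irrefl i), if_pos rfl, if_pos rfl, if_pos le_rfl, sub_self,
        abs_zero, mul_zero, neg_zero, Real.exp_zero, Nat.sub_self, pow_zero]
      ring
    · have hvv : j.val < i.val := hij
      rw [if_neg (not_lt.2 hij.le), if_neg (ne_of_gt hij), if_neg (ne_of_gt hij),
        if_pos (by omega : j.val ≤ i.val),
        hgrid i j hvv.le, abs_of_nonneg (by positivity), hexp]
      ring
  have hnuN : nuN n N ρ T (((n:ℝ) - 1) / 4)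
      = fun k : Fin (N + 1) => nuf (n:ℝ) α q N k.val := by
    rw [nuN, hMmat]
    exact Minv_one (n:ℝ) α q hn' ha0 ha1 hq hq0 hq1 haq N
  have hsum : (∑ k : Fin (N + 1),
        (if k.val < m then nuN n N ρ T (((n:ℝ) - 1) / 4) k else 0))
      = ∑ k ∈ range m, nuf (n:ℝ) α q N k := by
    have e1 : (∑ k : Fin (N + 1),
          (if k.val < m then nuN n N ρ T (((n:ℝ) - 1) / 4) k else 0))
        = ∑ k ∈ range (N + 1), (if k < m then nuf (n:ℝ) α q N k else 0) := by
      rw [← Fin.sum_univ_eq_sum_range (fun k => if k < m then nuf (n:ℝ) α q N k else 0) (N + 1)]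
      apply Finset.sum_congr rfl
      intro k _
      rw [hnuN]
    rw [e1, ← Finset.sum_range_add_sum_Ico (fun k => if k < m then nuf (n:ℝ) α q N k else 0) hm2,
      Finset.sum_congr rfl (fun k hk => if_pos (mem_range.1 hk)),
      Finset.sum_eq_zero (fun k hk => if_neg (by rw [mem_Ico] at hk; omega)), add_zero]
  rw [hsum, sumf (n:ℝ) α q hn' ha0 ha1 hq hq0 hq1 N m hm1 hm2,
    show q ^ (N + 1 - m) * q ^ m = q ^ (N + 1) from by rw [← pow_add]; congr 1; omega]
end
end

section
/- Let n ≥ 2 be an integer, ρ > 0, θ ≥ 0, 0 = t_0 < t_1 < ⋯ < t_N = T a time grid, and x_1,…,x_n ∈ ℝ with mean x̄. Let ξ*_i := x̄·v + (x_i − x̄)·w be the equilibrium strategies. Then for each i, the equilibrium execution cost satisfies the identity (1/2)·(ξ*_i)^⊤Γ^θξ*_i + (ξ*_i)^⊤Γ̃(Σ_{j≠i}ξ*_j) = (1/2)·[ x̄²/(1^⊤ν) + x̄(x_i−x̄)·(1^⊤ν + 1^⊤ω)/((1^⊤ν)(1^⊤ω)) + (x_i−x̄)²/(1^⊤ω)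 + (n−1)·(x̄/(1^⊤ν))²·ν^⊤Γ̃ν + (x̄(x_i−x̄)/((1^⊤ν)(1^⊤ω)))·ω^⊤((n−1)Γ̃ − Γ̃^⊤)ν − ((x_i−x̄)/(1^⊤ω))²·ω^⊤Γ̃ω ]. -/
open Matrix Finset

noncomputable section

/-- `ν := (Γ^θ + (n−1)Γ̃)^{−1} 1`. -/
def nuG (n : ℕ) (ρ θ : ℝ) {N : ℕ} (t : Fin (N + 1) → ℝ) : Fin (N + 1) → ℝ :=
  (Gam ρ θ t + ((n : ℝ) - 1) • GamT ρ t)⁻¹.mulVec 1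

/-- `ω := (Γ^θ − Γ̃)^{−1} 1`. -/
def omG (ρ θ : ℝ) {N : ℕ} (t : Fin (N + 1) → ℝ) : Fin (N + 1) → ℝ :=
  (Gam ρ θ t - GamT ρ t)⁻¹.mulVec 1

/-- `v := ν / (1^⊤ν)`. -/
def vG (n : ℕ) (ρ θ : ℝ) {N : ℕ} (t : Fin (N + 1) → ℝ) : Fin (N + 1) → ℝ :=
  (1 / ∑ k, nuG n ρ θ t k) • nuG n ρ θ t

/-- `w := ω / (1^⊤ω)`. -/
def wG (ρ θ : ℝ) {N : ℕ} (t : Fin (N + 1) → ℝ) : Fin (N + 1) → ℝ :=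
  (1 / ∑ k, omG ρ θ t k) • omG ρ θ t

/-- The equilibrium strategy `ξ*_i = x̄ v + (x_i − x̄) w`. -/
def xiStar (n : ℕ) (ρ θ : ℝ) {N : ℕ} (t : Fin (N + 1) → ℝ) (x : Fin n → ℝ) (i : Fin n) :
    Fin (N + 1) → ℝ :=
  ((∑ j, x j) / (n : ℝ)) • vG n ρ θ t + (x i - (∑ j, x j) / (n : ℝ)) • wG ρ θ t

/-- Execution cost of a strategy `η` given the aggregate `g` of the opponents' strategies. -/
def costF (ρ θ : ℝ) {N : ℕ} (t : Fin (N + 1) → ℝ) (η g : Fin (N + 1) → ℝ) : ℝ :=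
  (1 / 2) * (η ⬝ᵥ (Gam ρ θ t).mulVec η) + η ⬝ᵥ (GamT ρ t).mulVec g

namespace Stmt19Aux

variable {N : ℕ}

/-- The symmetric exponential kernel matrix. -/
def Emat (ρ : ℝ) (t : Fin (N + 1) → ℝ) : Matrix (Fin (N + 1)) (Fin (N + 1)) ℝ :=
  Matrix.of (fun i j => Real.exp (-(ρ * |t i - t j|)))

/-- Squared diagonal increments for the Cholesky factor. -/
def dfun (ρ : ℝ) (t : Fin (N + 1) → ℝ) : Fin (N + 1) → ℝ :=
  fun k => Real.exp (2 * ρ * t k) -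
    (if (k : ℕ) = 0 then 0 else
      Real.exp (2 * ρ * t ⟨(k : ℕ) - 1, lt_of_le_of_lt (Nat.sub_le _ _) k.isLt⟩))

lemma dfun_pos {ρ : ℝ} (hρ : 0 < ρ) {t : Fin (N + 1) → ℝ} (hmono : StrictMono t)
    (k : Fin (N + 1)) : 0 < dfun ρ t k := by
  unfold dfun
  split_ifs with h
  · simpa using Real.exp_pos _
  · have hlt : (⟨(k : ℕ) - 1, lt_of_le_of_lt (Nat.sub_le _ _) k.isLt⟩ : Fin (N+1)) < k := by
      simp only [Fin.lt_def, Fin.val_mk]; omega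
    have := hmono hlt
    have : 2 * ρ * t ⟨(k : ℕ) - 1, lt_of_le_of_lt (Nat.sub_le _ _) k.isLt⟩ < 2 * ρ * t k := by
      nlinarith
    have := Real.exp_lt_exp.2 this
    linarith

lemma Iic_succ_fin (m : Fin N) :
    Finset.Iic (m.succ) = insert m.succ (Finset.Iic m.castSucc) := by
  ext k
  simp only [Finset.mem_Iic, Finset.mem_insert, Fin.le_def, Fin.ext_iff, Fin.val_succ,
    Fin.coe_castSucc]
  omega

lemma dfun_sum {ρ : ℝ} (t : Fin (N + 1) → ℝ) (m : Fin (N + 1)) :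
    ∑ k ∈ Finset.Iic m, dfun ρ t k = Real.exp (2 * ρ * t m) := by
  induction m using Fin.induction with
  | zero =>
      have : Finset.Iic (0 : Fin (N+1)) = {0} := by
        ext k; simp only [Finset.mem_Iic, Finset.mem_singleton, Fin.le_def, Fin.ext_iff, Fin.val_zero]
        constructor <;> intro h <;> omega
      simp [this, dfun]
  | succ m ih =>
      rw [Iic_succ_fin, Finset.sum_insert (by simp [Fin.le_def])]
      rw [ih]
      have h1 : ((m.succ : Fin (N+1)) : ℕ) ≠ 0 := by simp
      have h2 : (⟨((m.succ : Fin (N+1)) : ℕ) - 1,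
          lt_of_le_of_lt (Nat.sub_le _ _) (m.succ).isLt⟩ : Fin (N+1)) = m.castSucc := by
        simp [Fin.ext_iff]
      simp only [dfun, h1, if_false, h2]
      ring

/-- The Cholesky factor of `Emat`. -/
def Lmat (ρ : ℝ) (t : Fin (N + 1) → ℝ) : Matrix (Fin (N + 1)) (Fin (N + 1)) ℝ :=
  Matrix.of (fun i k =>
    if k ≤ i then Real.exp (-(ρ * t i)) * Real.sqrt (dfun ρ t k) else 0)

lemma Lmat_mul_transpose {ρ : ℝ} (hρ : 0 < ρ) {t : Fin (N + 1) → ℝ} (hmono : StrictMono t) :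
    Lmat ρ t * (Lmat ρ t)ᵀ = Emat ρ t := by
  ext i j
  have hd : ∀ k, 0 ≤ dfun ρ t k := fun k => (dfun_pos hρ hmono k).le
  have step : ∀ k : Fin (N+1), Lmat ρ t i k * (Lmat ρ t)ᵀ k j
      = if k ∈ Finset.Iic (min i j) then
          Real.exp (-(ρ * t i)) * Real.exp (-(ρ * t j)) * dfun ρ t k else 0 := by
    intro k
    simp only [Lmat, transpose_apply, Matrix.of_apply, Finset.mem_Iic, le_min_iff]
    by_cases h1 : k ≤ i <;> by_cases h2 : k ≤ j
    · rw [if_pos h1, if_pos h2, if_pos ⟨h1, h2⟩]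
      linear_combination (Real.exp (-(ρ * t i)) * Real.exp (-(ρ * t j))) *
        Real.mul_self_sqrt (hd k)
    · simp [h1, h2]
    · simp [h1, h2]
    · simp [h1, h2]
  rw [Matrix.mul_apply]
  simp only [step]
  rw [Finset.sum_ite_mem, Finset.univ_inter, ← Finset.mul_sum, dfun_sum]
  rw [Emat]
  simp only [Matrix.of_apply]
  rw [← Real.exp_add, ← Real.exp_add]
  congr 1
  rcases le_total i j with h | h
  · have hle := hmono.monotone h
    rw [min_eq_left h, abs_of_nonpos (by linarith)]
    ring
  · have hle := hmono.monotone h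
    rw [min_eq_right h, abs_of_nonneg (by linarith)]
    ring

lemma Lmat_det_ne_zero {ρ : ℝ} (hρ : 0 < ρ) {t : Fin (N + 1) → ℝ} (hmono : StrictMono t) :
    ((Lmat ρ t)ᵀ).det ≠ 0 := by
  have hbt : ((Lmat ρ t)ᵀ).BlockTriangular id := by
    intro i j hij
    simp only [id_eq] at hij
    simp only [Lmat, transpose_apply, Matrix.of_apply]
    rw [if_neg (not_le.2 hij)]
  rw [Matrix.det_of_upperTriangular hbt]
  apply Finset.prod_ne_zero_iff.2
  intro k _
  simp only [Lmat, transpose_apply, Matrix.of_apply, if_pos (le_refl k)]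
  have := dfun_pos hρ hmono k
  positivity

lemma Emat_quad_pos {ρ : ℝ} (hρ : 0 < ρ) {t : Fin (N + 1) → ℝ} (hmono : StrictMono t)
    {y : Fin (N + 1) → ℝ} (hy : y ≠ 0) : 0 < y ⬝ᵥ (Emat ρ t) *ᵥ y := by
  set z := (Lmat ρ t)ᵀ *ᵥ y with hz
  have hzne : z ≠ 0 := by
    intro h0
    apply hy
    have hinv : ((Lmat ρ t)ᵀ)⁻¹ * (Lmat ρ t)ᵀ = 1 :=
      Matrix.nonsing_inv_mul _ (isUnit_iff_ne_zero.2 (Lmat_det_ne_zero hρ hmono))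
    calc y = (((Lmat ρ t)ᵀ)⁻¹ * (Lmat ρ t)ᵀ) *ᵥ y := by rw [hinv, Matrix.one_mulVec]
    _ = ((Lmat ρ t)ᵀ)⁻¹ *ᵥ z := by rw [← Matrix.mulVec_mulVec, hz]
    _ = 0 := by rw [h0, Matrix.mulVec_zero]
  have key : y ⬝ᵥ (Emat ρ t) *ᵥ y = z ⬝ᵥ z := by
    rw [← Lmat_mul_transpose hρ hmono, ← Matrix.mulVec_mulVec,
      Matrix.dotProduct_mulVec, ← Matrix.mulVec_transpose]
  rw [key]
  obtain ⟨k, hk⟩ := Function.ne_iff.1 hzne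
  have : (0:ℝ) < z k * z k := mul_self_pos.2 (by simpa using hk)
  exact Finset.sum_pos' (fun i _ => mul_self_nonneg _) ⟨k, Finset.mem_univ k, this⟩

lemma gamT_decomp {ρ : ℝ} {t : Fin (N + 1) → ℝ} (hmono : StrictMono t) :
    GamT ρ t + (GamT ρ t)ᵀ = Emat ρ t := by
  ext i j
  simp only [Matrix.add_apply, Matrix.transpose_apply, GamT, Emat, Matrix.of_apply]
  rcases lt_trichotomy i j with h | h | h
  · rw [if_pos h, if_neg (not_lt.2 h.le), if_neg (ne_of_gt h)]
    rw [abs_of_nonpos (by have := hmono h; linarith)]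
    ring_nf
  · subst h
    simp
    norm_num
  · rw [if_neg (not_lt.2 h.le), if_neg (ne_of_gt h), if_pos h]
    rw [abs_of_nonneg (by have := hmono h; linarith)]
    ring_nf

lemma gam_decomp (ρ θ : ℝ) (t : Fin (N + 1) → ℝ) :
    Gam ρ θ t = Emat ρ t + (2 * θ) • (1 : Matrix (Fin (N+1)) (Fin (N+1)) ℝ) := by
  ext i j
  simp only [Gam, Emat, Matrix.add_apply, Matrix.smul_apply, Matrix.one_apply, Matrix.of_apply,
    smul_eq_mul]
  by_cases h : i = j <;> simp [h]

lemma quad_transpose (M : Matrix (Fin (N+1)) (Fin (N+1)) ℝ) (y : Fin (N+1) → ℝ) :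
    y ⬝ᵥ Mᵀ *ᵥ y = y ⬝ᵥ M *ᵥ y := by
  rw [Matrix.dotProduct_mulVec, ← Matrix.mulVec_transpose, Matrix.transpose_transpose,
    dotProduct_comm]

lemma quad_GamT_pos {ρ : ℝ} (hρ : 0 < ρ) {t : Fin (N + 1) → ℝ} (hmono : StrictMono t)
    {y : Fin (N + 1) → ℝ} (hy : y ≠ 0) : 0 < y ⬝ᵥ (GamT ρ t) *ᵥ y := by
  have h := Emat_quad_pos hρ hmono hy (t := t)
  rw [← gamT_decomp hmono, Matrix.add_mulVec, dotProduct_add, quad_transpose] at h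
  linarith

lemma quad_Gam_eq (ρ θ : ℝ) (t : Fin (N + 1) → ℝ) (hmono : StrictMono t) (y : Fin (N+1) → ℝ) :
    y ⬝ᵥ (Gam ρ θ t) *ᵥ y = 2 * (y ⬝ᵥ (GamT ρ t) *ᵥ y) + 2 * θ * (y ⬝ᵥ y) := by
  rw [gam_decomp, ← gamT_decomp hmono]
  simp only [Matrix.add_mulVec, dotProduct_add, Matrix.smul_mulVec,
    Matrix.one_mulVec, dotProduct_smul, quad_transpose, smul_eq_mul]
  ring

lemma quad_AB_pos {ρ θ : ℝ} (hρ : 0 < ρ) (hθ : 0 ≤ θ) {t : Fin (N + 1) → ℝ}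
    (hmono : StrictMono t) {c : ℝ} (hc : -1 ≤ c)
    {y : Fin (N + 1) → ℝ} (hy : y ≠ 0) :
    0 < y ⬝ᵥ (Gam ρ θ t + c • GamT ρ t) *ᵥ y := by
  have hq := quad_GamT_pos hρ hmono hy (t := t)
  have hs : 0 ≤ y ⬝ᵥ y := Finset.sum_nonneg (fun i _ => mul_self_nonneg _)
  rw [Matrix.add_mulVec, dotProduct_add, Matrix.smul_mulVec, dotProduct_smul,
    quad_Gam_eq ρ θ t hmono, smul_eq_mul]
  nlinarith

lemma det_AB_ne_zero {ρ θ : ℝ} (hρ : 0 < ρ) (hθ : 0 ≤ θ) {t : Fin (N + 1) → ℝ}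
    (hmono : StrictMono t) {c : ℝ} (hc : -1 ≤ c) :
    (Gam ρ θ t + c • GamT ρ t).det ≠ 0 := by
  intro hdet
  obtain ⟨v, hv, hv0⟩ := (Matrix.exists_mulVec_eq_zero_iff).2 hdet
  have := quad_AB_pos hρ hθ hmono hc hv
  rw [hv0, dotProduct_zero] at this
  exact lt_irrefl _ this

lemma mulVec_inv_one {M : Matrix (Fin (N+1)) (Fin (N+1)) ℝ} (h : M.det ≠ 0) :
    M *ᵥ (M⁻¹ *ᵥ (1 : Fin (N+1) → ℝ)) = 1 := by
  rw [Matrix.mulVec_mulVec, Matrix.mul_nonsing_inv _ (isUnit_iff_ne_zero.2 h),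
    Matrix.one_mulVec]

lemma sum_pos_of_inv_one {M : Matrix (Fin (N+1)) (Fin (N+1)) ℝ}
    (hM : ∀ y : Fin (N+1) → ℝ, y ≠ 0 → 0 < y ⬝ᵥ M *ᵥ y) (h : M.det ≠ 0) :
    0 < ∑ k, (M⁻¹ *ᵥ (1 : Fin (N+1) → ℝ)) k := by
  set v := M⁻¹ *ᵥ (1 : Fin (N+1) → ℝ) with hv
  have h1 : M *ᵥ v = 1 := mulVec_inv_one h
  have hvne : v ≠ 0 := by
    intro h0
    rw [h0, Matrix.mulVec_zero] at h1
    have := congrFun h1 0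
    simp at this
  have := hM v hvne
  rw [h1] at this
  simpa [dotProduct] using this

lemma bilin (M : Matrix (Fin (N+1)) (Fin (N+1)) ℝ) (α β γ δ : ℝ) (u v : Fin (N+1) → ℝ) :
    (α • u + β • v) ⬝ᵥ M *ᵥ (γ • u + δ • v)
      = α * γ * (u ⬝ᵥ M *ᵥ u) + α * δ * (u ⬝ᵥ M *ᵥ v)
        + β * γ * (v ⬝ᵥ M *ᵥ u) + β * δ * (v ⬝ᵥ M *ᵥ v) := by
  simp only [Matrix.mulVec_add, Matrix.mulVec_smul, dotProduct_add,
    add_dotProduct, dotProduct_smul, smul_dotProduct, smul_eq_mul]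
  ring

lemma dot_transpose (M : Matrix (Fin (N+1)) (Fin (N+1)) ℝ) (u v : Fin (N+1) → ℝ) :
    u ⬝ᵥ Mᵀ *ᵥ v = v ⬝ᵥ M *ᵥ u := by
  rw [Matrix.dotProduct_mulVec, Matrix.vecMul_transpose, dotProduct_comm]

end Stmt19Aux

open Stmt19Aux in
/-- Closed form of the equilibrium execution cost in terms of `ν`, `ω` and the quadratic
forms `ν^⊤Γ̃ν`, `ω^⊤((n−1)Γ̃ − Γ̃^⊤)ν`, `ω^⊤Γ̃ω`. -/
theorem stmt19 (n : ℕ) (hn : 2 ≤ n) (ρ θ T : ℝ) (hρ : 0 < ρ) (hθ : 0 ≤ θ)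
    (N : ℕ) (hN : 1 ≤ N) (t : Fin (N + 1) → ℝ)
    (ht0 : t 0 = 0) (htT : t (Fin.last N) = T) (hmono : StrictMono t)
    (x : Fin n → ℝ) (xb : ℝ) (hxb : xb = (∑ j, x j) / (n : ℝ))
    (Sν Sω : ℝ) (hSν : Sν = ∑ k, nuG n ρ θ t k) (hSω : Sω = ∑ k, omG ρ θ t k) :
    ∀ i : Fin n,
      costF ρ θ t (xiStar n ρ θ t x i) (∑ j ∈ Finset.univ.erase i, xiStar n ρ θ t x j)
        = (1 / 2) *
          (xb ^ 2 / Sν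
            + xb * (x i - xb) * (Sν + Sω) / (Sν * Sω)
            + (x i - xb) ^ 2 / Sω
            + ((n : ℝ) - 1) * (xb / Sν) ^ 2 *
                (nuG n ρ θ t ⬝ᵥ (GamT ρ t).mulVec (nuG n ρ θ t))
            + (xb * (x i - xb) / (Sν * Sω)) *
                (omG ρ θ t ⬝ᵥ
                  ((((n : ℝ) - 1) • GamT ρ t - (GamT ρ t)ᵀ).mulVec (nuG n ρ θ t)))
            - ((x i - xb) / Sω) ^ 2 *
                (omG ρ θ t ⬝ᵥ (GamT ρ t).mulVec (omG ρ θ t))) := by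
  intro i
  have hn1 : (1:ℝ) ≤ (n:ℝ) - 1 := by
    have : (2:ℝ) ≤ (n:ℝ) := by exact_mod_cast hn
    linarith
  have hcA : (-1:ℝ) ≤ (n:ℝ) - 1 := by linarith
  have hcB : (-1:ℝ) ≤ (-1:ℝ) := le_refl _
  have hBeq : Gam ρ θ t - GamT ρ t = Gam ρ θ t + (-1 : ℝ) • GamT ρ t := by
    rw [neg_one_smul, sub_eq_add_neg]
  set ν := nuG n ρ θ t with hν
  set ω := omG ρ θ t with hω
  set G := GamT ρ t with hG
  set Γ := Gam ρ θ t with hΓ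
  have hdetA : (Γ + ((n:ℝ) - 1) • G).det ≠ 0 := det_AB_ne_zero hρ hθ hmono hcA
  have hdetB : (Γ + (-1:ℝ) • G).det ≠ 0 := det_AB_ne_zero hρ hθ hmono hcB
  have hAν : (Γ + ((n:ℝ) - 1) • G) *ᵥ ν = 1 := mulVec_inv_one hdetA
  have hBω : (Γ + (-1:ℝ) • G) *ᵥ ω = 1 := by
    rw [hω, omG, ← hΓ, ← hG, hBeq]
    exact mulVec_inv_one hdetB
  have hSνpos : 0 < Sν := by
    rw [hSν, hν, nuG, ← hΓ, ← hG]
    exact sum_pos_of_inv_one (fun y hy => quad_AB_pos hρ hθ hmono hcA hy) hdetA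
  have hSωpos : 0 < Sω := by
    rw [hSω, hω, omG, ← hΓ, ← hG, hBeq]
    exact sum_pos_of_inv_one (fun y hy => quad_AB_pos hρ hθ hmono hcB hy) hdetB
  have hSν0 : Sν ≠ 0 := ne_of_gt hSνpos
  have hSω0 : Sω ≠ 0 := ne_of_gt hSωpos
  have hΓν : Γ *ᵥ ν = 1 - ((n:ℝ) - 1) • (G *ᵥ ν) := by
    rw [eq_sub_iff_add_eq, ← Matrix.smul_mulVec, ← Matrix.add_mulVec, hAν]
  have hΓω : Γ *ᵥ ω = 1 + G *ᵥ ω := by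
    have h := hBω
    rw [Matrix.add_mulVec, Matrix.smul_mulVec, neg_one_smul] at h
    have := sub_eq_iff_eq_add'.1 (by rw [← h]; abel : Γ *ᵥ ω - G *ᵥ ω = (1:Fin (N+1) → ℝ))
    linear_combination (norm := module) this
  set qνν := ν ⬝ᵥ G *ᵥ ν with hqνν
  set qνω := ν ⬝ᵥ G *ᵥ ω with hqνω
  set qων := ω ⬝ᵥ G *ᵥ ν with hqων
  set qωω := ω ⬝ᵥ G *ᵥ ω with hqωω
  have hdotν : ∀ u : Fin (N+1) → ℝ, u ⬝ᵥ Γ *ᵥ ν = (∑ k, u k) - ((n:ℝ)-1) * (u ⬝ᵥ G *ᵥ ν) := by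
    intro u
    rw [hΓν, dotProduct_sub, dotProduct_smul, dotProduct_one, smul_eq_mul]
  have hdotω : ∀ u : Fin (N+1) → ℝ, u ⬝ᵥ Γ *ᵥ ω = (∑ k, u k) + (u ⬝ᵥ G *ᵥ ω) := by
    intro u
    rw [hΓω, dotProduct_add, dotProduct_one]
  have hΓνν : ν ⬝ᵥ Γ *ᵥ ν = Sν - ((n:ℝ)-1) * qνν := by rw [hdotν, ← hSν]
  have hΓνω : ν ⬝ᵥ Γ *ᵥ ω = Sν + qνω := by rw [hdotω, ← hSν]
  have hΓων : ω ⬝ᵥ Γ *ᵥ ν = Sω - ((n:ℝ)-1) * qων := by rw [hdotν, ← hSω]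
  have hΓωω : ω ⬝ᵥ Γ *ᵥ ω = Sω + qωω := by rw [hdotω, ← hSω]
  set c := (∑ j, x j) / (n : ℝ) with hc
  have hnne : (n:ℝ) ≠ 0 := Nat.cast_ne_zero.2 (by omega)
  have hηeq : xiStar n ρ θ t x i = (c * (1/Sν)) • ν + ((x i - c) * (1/Sω)) • ω := by
    rw [xiStar, vG, wG, ← hν, ← hω, ← hSν, ← hSω, smul_smul, smul_smul, ← hc]
  have hxij : ∀ j, xiStar n ρ θ t x j = (c * (1/Sν)) • ν + ((x j - c) * (1/Sω)) • ω := by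
    intro j
    rw [xiStar, vG, wG, ← hν, ← hω, ← hSν, ← hSω, smul_smul, smul_smul, ← hc]
  have hcard : (Finset.univ.erase i).card = n - 1 := by
    rw [Finset.card_erase_of_mem (Finset.mem_univ i), Finset.card_univ, Fintype.card_fin]
  have hxsum : ∑ j, x j = (n:ℝ) * c := by rw [hc]; field_simp
  have hcast : ((n - 1 : ℕ) : ℝ) = (n:ℝ) - 1 := by
    rw [Nat.cast_sub (by omega)]; norm_num
  have hgeq : ∑ j ∈ Finset.univ.erase i, xiStar n ρ θ t x j
      = (((n:ℝ)-1) * c * (1/Sν)) • ν + ((c - x i) * (1/Sω)) • ω := by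
    simp only [hxij]
    rw [Finset.sum_add_distrib, Finset.sum_const, hcard, ← Finset.sum_smul]
    congr 1
    · rw [← Nat.cast_smul_eq_nsmul ℝ, smul_smul, hcast]
      ring_nf
    · congr 1
      rw [← Finset.sum_mul, Finset.sum_sub_distrib,
        Finset.sum_erase_eq_sub (Finset.mem_univ i), hxsum, Finset.sum_const, hcard,
        nsmul_eq_mul, hcast]
      ring
  have hmid : ω ⬝ᵥ (((n:ℝ)-1) • G - Gᵀ) *ᵥ ν = ((n:ℝ)-1) * qων - qνω := by
    rw [Matrix.sub_mulVec, dotProduct_sub, Matrix.smul_mulVec,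
      dotProduct_smul, smul_eq_mul, dot_transpose, hqνω, hqων]
  rw [costF, hηeq, hgeq, ← hΓ, ← hG, bilin, bilin, hΓνν, hΓνω, hΓων, hΓωω, hmid,
    ← hqνν, ← hqωω, ← hqνω, ← hqων, hxb]
  field_simp
  ring
end
end
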